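/- arXiv:1605.03218 — 7 statements merged into one kernel-verified Lean document; each statement's English description precedes it below -/
import Mathlib

section
/- The Camassa–Holm kernel A(x,y) := (1/2) sgn(x−y) e^{−|x−y|} and the Hunter–Saxton kernel B(x,y) := 𝟙_{(−∞,x]}(y) satisfy Assumptions 1: (i) for all x₁ < x₂ and all y ∈ ℝ, A(x₂,y) − A(x₁,y) ≥ −(x₂ − x₁) (i.e., the difference quotients of A in the first variable are bounded below by −1) and B(x₂,y) − B(x₁,y) ≥ 0; (ii) for every f ∈ L¹(ℝ), the maps x ↦ ∫_ℝ A(x,y) f(y) dy and x ↦ ∫_ℝ B(x,y) f(y) dy are continuous on ℝ. -/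
open MeasureTheory Set

/-! Both kernels are of convolution type `K(x, y) = k(x - y)`, with `k` bounded and continuous
away from `0`. For such kernels the map `x ↦ ∫ k(x - y) f(y) dy` is continuous by dominated
convergence, because for fixed `x₀` the integrand is continuous at `x₀` for every `y ≠ x₀`.
The one-sided Lipschitz bound amounts to the monotonicity of `t ↦ k(t) + t`: for the
Camassa–Holm kernel `k` jumps upwards at `0`, and away from `0` it is `± e^{-|t|} / 2`, whose
slope is at least `-1/2`. -/

theorem continuous_integral_mul_of_bounded {X α : Type*} [TopologicalSpace X]
    [FirstCountableTopology X] [MeasurableSpace α] {μ : Measure α} {K : X → α → ℝ}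
    {f : α → ℝ} {C : ℝ}
    (hf : Integrable f μ) (hK_meas : ∀ x, AEStronglyMeasurable (K x) μ)
    (hK_bound : ∀ x y, |K x y| ≤ C) (hK_cont : ∀ x₀, ∀ᵐ y ∂μ, ContinuousAt (K · y) x₀) :
    Continuous fun x => ∫ y, K x y * f y ∂μ := by
  refine continuous_iff_continuousAt.2 fun x₀ => continuousAt_of_dominated
    (bound := fun y => C * |f y|) (.of_forall fun x => (hK_meas x).mul hf.1)
    (.of_forall fun x => .of_forall fun y => ?_) (hf.abs.const_mul C) ?_
  · rw [Real.norm_eq_abs, abs_mul]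
    exact mul_le_mul_of_nonneg_right (hK_bound x y) (abs_nonneg _)
  · filter_upwards [hK_cont x₀] with y hy using hy.mul continuousAt_const

theorem continuous_integral_sub_mul_of_continuousOn_compl_singleton {k f : ℝ → ℝ} {a C : ℝ}
    (hk_cont : ContinuousOn k {a}ᶜ) (hk_bound : ∀ t, |k t| ≤ C) (hf : Integrable f) :
    Continuous fun x => ∫ y, k (x - y) * f y := by
  refine continuous_integral_mul_of_bounded (K := fun x y => k (x - y)) hf
    (fun x => ?_) (fun x y => hk_bound _) (fun x₀ => ?_)
  · exact ((measurable_of_continuousOn_compl_singleton a hk_cont).comp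
      (measurable_const.sub measurable_id)).aestronglyMeasurable
  · filter_upwards [volume.ae_ne (x₀ - a)] with y hy
    have hne : x₀ - y ≠ a := fun h => hy (by linarith)
    exact (hk_cont.continuousAt (isOpen_compl_singleton.mem_nhds hne)).comp (f := (· - y))
      (continuousAt_id.sub continuousAt_const)

theorem Real.continuousAt_sign_of_ne_zero {t : ℝ} (ht : t ≠ 0) : ContinuousAt Real.sign t := by
  rcases ht.lt_or_gt with ht | ht
  · exact continuousAt_const.congr
      ((eventually_lt_nhds ht).mono fun s hs => (Real.sign_of_neg hs).symm)
  · exact continuousAt_const.congr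
      ((eventually_gt_nhds ht).mono fun s hs => (Real.sign_of_pos hs).symm)

theorem Real.exp_sub_exp_le_of_nonpos {a b : ℝ} (hab : a ≤ b) (hb : b ≤ 0) :
    Real.exp b - Real.exp a ≤ b - a := by
  have hexp : Real.exp a = Real.exp b * Real.exp (a - b) := by rw [← Real.exp_add]; ring_nf
  have h_tangent := Real.add_one_le_exp (a - b)
  have h_le_one : Real.exp b ≤ 1 := Real.exp_le_one_iff.2 hb
  nlinarith [Real.exp_pos b]

noncomputable def camassaHolmKernel (t : ℝ) : ℝ := 1 / 2 * Real.sign t * Real.exp (-|t|)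

noncomputable def heaviside : ℝ → ℝ := (Ici 0).indicator 1

section camassaHolmKernel

variable {t : ℝ}

theorem camassaHolmKernel_of_neg (ht : t < 0) : camassaHolmKernel t = -Real.exp t / 2 := by
  rw [camassaHolmKernel, Real.sign_of_neg ht, abs_of_neg ht, neg_neg]; ring

theorem camassaHolmKernel_of_pos (ht : 0 < t) : camassaHolmKernel t = Real.exp (-t) / 2 := by
  rw [camassaHolmKernel, Real.sign_of_pos ht, abs_of_pos ht]; ring

@[simp]
theorem camassaHolmKernel_zero : camassaHolmKernel 0 = 0 := by simp [camassaHolmKernel]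

theorem camassaHolmKernel_nonpos (ht : t ≤ 0) : camassaHolmKernel t ≤ 0 := by
  rcases ht.lt_or_eq with ht | rfl
  · rw [camassaHolmKernel_of_neg ht]; linarith [Real.exp_pos t]
  · simp

theorem camassaHolmKernel_nonneg (ht : 0 ≤ t) : 0 ≤ camassaHolmKernel t := by
  rcases ht.lt_or_eq with ht | rfl
  · rw [camassaHolmKernel_of_pos ht]; positivity
  · simp

theorem abs_camassaHolmKernel_le (t : ℝ) : |camassaHolmKernel t| ≤ 1 / 2 := by
  rcases lt_trichotomy t 0 with ht | rfl | ht
  · rw [camassaHolmKernel_of_neg ht, abs_div, abs_neg, abs_of_pos (Real.exp_pos t)]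
    linarith [Real.exp_le_one_iff.2 ht.le]
  · simp
  · rw [camassaHolmKernel_of_pos ht, abs_div, abs_of_pos (Real.exp_pos _)]
    linarith [Real.exp_le_one_iff.2 (neg_nonpos.2 ht.le)]

theorem continuousOn_camassaHolmKernel : ContinuousOn camassaHolmKernel {0}ᶜ := by
  have hsign : ContinuousOn Real.sign {0}ᶜ := fun t ht =>
    (Real.continuousAt_sign_of_ne_zero ht).continuousWithinAt
  exact (continuousOn_const.mul hsign).mul (by fun_prop)

theorem monotone_camassaHolmKernel_add_id : Monotone fun t => camassaHolmKernel t + t := by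
  intro a b hab
  dsimp only
  rcases lt_or_ge b 0 with hb | hb
  · rw [camassaHolmKernel_of_neg hb, camassaHolmKernel_of_neg (hab.trans_lt hb)]
    linarith [Real.exp_sub_exp_le_of_nonpos hab hb.le]
  rcases lt_or_ge 0 a with ha | ha
  · rw [camassaHolmKernel_of_pos ha, camassaHolmKernel_of_pos (ha.trans_le hab)]
    linarith [Real.exp_sub_exp_le_of_nonpos (neg_le_neg hab) (neg_nonpos.2 ha.le)]
  · linarith [camassaHolmKernel_nonpos ha, camassaHolmKernel_nonneg hb]

end camassaHolmKernel

theorem monotone_heaviside : Monotone heaviside := by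
  intro a b hab
  by_cases ha : 0 ≤ a
  · simp [heaviside, ha, ha.trans hab]
  · simp [heaviside, ha, indicator_nonneg]

theorem indicator_Iic_one_apply (x y : ℝ) :
    (Iic x).indicator (fun _ => (1 : ℝ)) y = heaviside (x - y) := by
  simp [heaviside, indicator_apply, sub_nonneg]

theorem abs_heaviside_le (t : ℝ) : |heaviside t| ≤ 1 := by
  simpa [heaviside] using norm_indicator_le_norm_self (s := Ici 0) (1 : ℝ → ℝ) t

theorem continuousOn_heaviside : ContinuousOn heaviside {0}ᶜ := by
  rw [heaviside, ← piecewise_eq_indicator]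
  refine ContinuousOn.piecewise (fun t ht => ?_) continuousOn_const continuousOn_const
  simp_all

/-- The Camassa–Holm kernel `A(x,y) = (1/2) sgn(x−y) e^{−|x−y|}` and the
Hunter–Saxton kernel `B(x,y) = 𝟙_{(−∞,x]}(y)` satisfy Assumptions 1: their difference
quotients in the first variable are bounded below by `−1` resp. `0`, and the maps
`x ↦ ∫ A(x,y) f(y) dy`, `x ↦ ∫ B(x,y) f(y) dy` are continuous for every `f ∈ L¹(ℝ)`. -/
theorem camassaHolm_hunterSaxton_kernels_satisfy_assumptions :
    (∀ x₁ x₂ y : ℝ, x₁ < x₂ →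
      (1 / 2) * Real.sign (x₂ - y) * Real.exp (-|x₂ - y|)
        - (1 / 2) * Real.sign (x₁ - y) * Real.exp (-|x₁ - y|) ≥ -(x₂ - x₁)) ∧
    (∀ x₁ x₂ y : ℝ, x₁ < x₂ →
      (Iic x₂).indicator (fun _ => (1:ℝ)) y - (Iic x₁).indicator (fun _ => (1:ℝ)) y ≥ 0) ∧
    (∀ f : ℝ → ℝ, Integrable f →
      Continuous (fun x => ∫ y : ℝ,
        (1 / 2) * Real.sign (x - y) * Real.exp (-|x - y|) * f y)) ∧
    (∀ f : ℝ → ℝ, Integrable f →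
      Continuous (fun x => ∫ y : ℝ, (Iic x).indicator (fun _ => (1:ℝ)) y * f y)) := by
  refine ⟨fun x₁ x₂ y h => ?_, fun x₁ x₂ y h => ?_, fun f hf => ?_, fun f hf => ?_⟩
  · have := monotone_camassaHolmKernel_add_id (sub_le_sub_right h.le y)
    simp only [camassaHolmKernel] at this
    linarith
  · rw [indicator_Iic_one_apply, indicator_Iic_one_apply, ge_iff_le, sub_nonneg]
    exact monotone_heaviside (sub_le_sub_right h.le y)
  · exact continuous_integral_sub_mul_of_continuousOn_compl_singleton
      continuousOn_camassaHolmKernel abs_camassaHolmKernel_le hf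
  · simp only [indicator_Iic_one_apply]
    exact continuous_integral_sub_mul_of_continuousOn_compl_singleton
      continuousOn_heaviside abs_heaviside_le hf
end

section
/- Let T > 0 and let u : [0,T] × ℝ → ℝ be continuous and bounded. Let {x_α}_{α∈A} be a nonempty family of functions on [0,T] satisfying x_α(0) = x and x_α'(t) = u(t, x_α(t)) for all t ∈ [0,T] and all α. Then the function y(t) := sup_{α∈A} x_α(t) is real-valued and Lipschitz continuous on [0,T], and at every t ∈ (0,T) at which y is differentiable one has y'(t) = u(t, y(t)); consequently y(t) = x + ∫₀ᵗ u(s, y(s)) ds for all t ∈ [0,T]. The same conclusions hold for z(t) := inf_{α∈A} x_α(t). -/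
/-!
Every characteristic moves with speed at most `sup |u|`, so the supremum `y` of the family is
finite and Lipschitz. Fix `t₀` and put `c = u(t₀, y(t₀))`. By continuity of `u`, a characteristic
that passes close to `y(t₀)` near time `t₀` has slope close to `c` there, while one starting well
below `y` cannot reach it within a short time. Hence the difference quotients of `y` at `t₀` tend to
`c` (one-sidedly at the endpoints), so `y` is itself a characteristic on `[0,T]` and the integral
identity is the fundamental theorem of calculus. The infimum is `-sup (-x_α)`, and the `-x_α` are
characteristics of `ẋ = -u(t, -x)`.
-/

open Set Function Topology
open scoped NNReal

def IsCharacteristicOn (u : ℝ → ℝ → ℝ) (S : Set ℝ) (x : ℝ → ℝ) : Prop :=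
  ∀ t ∈ S, HasDerivWithinAt x (u t (x t)) S t

def HasUniformSlopeNear {ι : Type*} (X : ι → ℝ → ℝ) (S : Set ℝ) (t₀ y₀ c : ℝ) : Prop :=
  ∀ ε > 0, ∃ δ > 0, ∀ i, ∀ a ∈ S, ∀ b ∈ S, a ≤ b → |a - t₀| ≤ δ → |b - t₀| ≤ δ →
    |X i a - y₀| ≤ δ → |X i b - X i a - c * (b - a)| ≤ ε * (b - a)

theorem Real.iInf_eq_neg_iSup_neg {ι : Type*} (f : ι → ℝ) : ⨅ i, f i = -⨆ i, -f i := by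
  rw [iInf, iSup, Real.sInf_def, ← image_neg_eq_neg, ← range_comp]
  rfl

theorem bddAbove_range_neg_iff {ι : Type*} {f : ι → ℝ} :
    BddAbove (range fun i => -f i) ↔ BddBelow (range f) := by
  rw [← neg_range, bddAbove_neg]

theorem LipschitzOnWith.abs_sub_le {K : ℝ≥0} {f : ℝ → ℝ} {S : Set ℝ}
    (hf : LipschitzOnWith K f S) {a b : ℝ} (ha : a ∈ S) (hb : b ∈ S) :
    |f a - f b| ≤ K * |a - b| := by
  simpa only [Real.dist_eq] using hf.dist_le_mul a ha b hb

theorem abs_sub_sub_mul_le_of_abs_deriv_sub_le {f f' : ℝ → ℝ} {a b c ε : ℝ} (hab : a ≤ b)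
    (hf : ∀ s ∈ Icc a b, HasDerivWithinAt f (f' s) (Icc a b) s)
    (hf' : ∀ s ∈ Icc a b, |f' s - c| ≤ ε) :
    |f b - f a - c * (b - a)| ≤ ε * (b - a) := by
  have h := Convex.norm_image_sub_le_of_norm_hasDerivWithin_le
    (f := fun s => f s - c * s) (f' := fun s => f' s - c)
    (fun s hs => (hf s hs).sub (by simpa using (hasDerivWithinAt_id s (Icc a b)).const_mul c))
    hf' (convex_Icc a b) (left_mem_Icc.2 hab) (right_mem_Icc.2 hab)
  rw [Real.norm_eq_abs, Real.norm_eq_abs, abs_of_nonneg (sub_nonneg.2 hab)] at h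
  convert h using 2
  ring

section SupOfLipschitzFamily

variable {ι : Type*} {X : ι → ℝ → ℝ} {S : Set ℝ} {K : ℝ≥0}

theorem bddAbove_range_of_lipschitzOnWith (hX : ∀ i, LipschitzOnWith K (X i) S) {t₁ t : ℝ}
    (ht₁ : t₁ ∈ S) (ht : t ∈ S) (h : BddAbove (range fun i => X i t₁)) :
    BddAbove (range fun i => X i t) := by
  obtain ⟨B, hB⟩ := h
  refine ⟨B + K * |t - t₁|, ?_⟩
  rintro _ ⟨i, rfl⟩
  have := hB (mem_range_self i)
  linarith [le_of_abs_le ((hX i).abs_sub_le ht ht₁)]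

theorem bddBelow_range_of_lipschitzOnWith (hX : ∀ i, LipschitzOnWith K (X i) S) {t₁ t : ℝ}
    (ht₁ : t₁ ∈ S) (ht : t ∈ S) (h : BddBelow (range fun i => X i t₁)) :
    BddBelow (range fun i => X i t) :=
  bddAbove_range_neg_iff.1 <| bddAbove_range_of_lipschitzOnWith (fun i => (hX i).neg) ht₁ ht
    (bddAbove_range_neg_iff.2 h)

variable [Nonempty ι]

theorem lipschitzOnWith_ciSup (hX : ∀ i, LipschitzOnWith K (X i) S)
    (hbdd : ∀ t ∈ S, BddAbove (range fun i => X i t)) :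
    LipschitzOnWith K (fun t => ⨆ i, X i t) S :=
  LipschitzOnWith.of_le_add_mul K fun _ ha b hb => ciSup_le fun i =>
    (hX i).le_add_mul ha hb |>.trans <| add_le_add_left (le_ciSup (hbdd b hb) i) _

theorem lipschitzOnWith_ciInf (hX : ∀ i, LipschitzOnWith K (X i) S)
    (hbdd : ∀ t ∈ S, BddBelow (range fun i => X i t)) :
    LipschitzOnWith K (fun t => ⨅ i, X i t) S := by
  have := (lipschitzOnWith_ciSup (fun i => (hX i).neg) fun t ht =>
    bddAbove_range_neg_iff.2 (hbdd t ht)).neg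
  simpa only [Real.iInf_eq_neg_iSup_neg, Pi.neg_def] using this

end SupOfLipschitzFamily

section SlopeOfSup

variable {ι : Type*} [Nonempty ι] {X : ι → ℝ → ℝ} {S : Set ℝ} {K : ℝ≥0} {t₀ c : ℝ}

theorem abs_ciSup_sub_ciSup_sub_mul_le (hX : ∀ i, LipschitzOnWith K (X i) S)
    (hbdd : ∀ t ∈ S, BddAbove (range fun i => X i t)) (ht₀ : t₀ ∈ S) {δ ε r a b : ℝ}
    (hε : 0 ≤ ε) (hslope : ∀ i, ∀ a ∈ S, ∀ b ∈ S, a ≤ b → |a - t₀| ≤ δ → |b - t₀| ≤ δ →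
      |X i a - ⨆ j, X j t₀| ≤ δ → |X i b - X i a - c * (b - a)| ≤ ε * (b - a))
    (hrδ : (3 * K + 2 * |c| + 1) * r ≤ δ) (ha : a ∈ S) (hb : b ∈ S) (hab : a ≤ b)
    (har : |a - t₀| ≤ r) (hbr : |b - t₀| ≤ r) :
    |(⨆ i, X i b) - (⨆ i, X i a) - c * (b - a)| ≤ ε * (b - a) := by
  have hK : (0 : ℝ) ≤ K := K.2
  have hr : 0 ≤ r := (abs_nonneg _).trans har
  have hKr : 0 ≤ K * r := by positivity
  have hcr : 0 ≤ |c| * r := by positivity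
  have hy := lipschitzOnWith_ciSup hX hbdd
  have hya := abs_le.1 <| (hy.abs_sub_le ha ht₀).trans (mul_le_mul_of_nonneg_left har hK)
  have hyb := abs_le.1 <| (hy.abs_sub_le hb ht₀).trans (mul_le_mul_of_nonneg_left hbr hK)
  have hba : b - a ≤ 2 * r := by linarith [(abs_le.1 har).1, (abs_le.1 hbr).2]
  have hεb : 0 ≤ ε * (b - a) := mul_nonneg hε (sub_nonneg.2 hab)
  have hcb : |c * (b - a)| ≤ |c| * (2 * r) := by
    rw [abs_mul, abs_of_nonneg (sub_nonneg.2 hab)]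
    exact mul_le_mul_of_nonneg_left hba (abs_nonneg c)
  have hcb' := abs_le.1 hcb
  -- members starting near the supremum have slope close to `c`; the others stay below it
  have hnear : ∀ i, (⨆ j, X j t₀) - δ ≤ X i a →
      |X i b - X i a - c * (b - a)| ≤ ε * (b - a) := fun i hi =>
    hslope i a ha b hb hab (by linarith [(abs_le.1 har).1, (abs_le.1 har).2])
      (by linarith [(abs_le.1 hbr).1, (abs_le.1 hbr).2]) <|
      abs_le.2 ⟨by linarith, by linarith [le_ciSup (hbdd a ha) i]⟩
  refine abs_le.2 ⟨?_, ?_⟩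
  · suffices (⨆ i, X i a) ≤ (⨆ i, X i b) - (c - ε) * (b - a) by linarith
    refine ciSup_le fun i => ?_
    by_cases hi : (⨆ j, X j t₀) - δ ≤ X i a
    · linarith [(abs_le.1 (hnear i hi)).1, le_ciSup (hbdd b hb) i]
    · linarith
  · suffices (⨆ i, X i b) ≤ (⨆ i, X i a) + (c + ε) * (b - a) by linarith
    refine ciSup_le fun i => ?_
    by_cases hi : (⨆ j, X j t₀) - δ ≤ X i a
    · linarith [(abs_le.1 (hnear i hi)).2, le_ciSup (hbdd a ha) i]
    · have hXi : X i b ≤ X i a + K * (b - a) := by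
        simpa [Real.dist_eq, abs_of_nonneg (sub_nonneg.2 hab)] using (hX i).le_add_mul hb ha
      linarith [mul_le_mul_of_nonneg_left hba hK]

theorem HasUniformSlopeNear.hasDerivWithinAt_ciSup
    (h : HasUniformSlopeNear X S t₀ (⨆ i, X i t₀) c) (hX : ∀ i, LipschitzOnWith K (X i) S)
    (hbdd : ∀ t ∈ S, BddAbove (range fun i => X i t)) (ht₀ : t₀ ∈ S) :
    HasDerivWithinAt (fun t => ⨆ i, X i t) c S t₀ := by
  refine hasDerivWithinAt_iff_isLittleO.2 <| Asymptotics.isLittleO_iff.2 fun ε hε => ?_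
  obtain ⟨δ, hδ, hslope⟩ := h ε hε
  set r := δ / (3 * K + 2 * |c| + 1)
  have hr : 0 < r := by positivity
  have hrδ : (3 * K + 2 * |c| + 1) * r ≤ δ := (mul_div_cancel₀ δ (by positivity)).le
  have hsup {a b : ℝ} := abs_ciSup_sub_ciSup_sub_mul_le (a := a) (b := b) hX hbdd ht₀ hε.le
    hslope hrδ
  have hr₀ : |t₀ - t₀| ≤ r := by simpa using hr.le
  filter_upwards [self_mem_nhdsWithin, nhdsWithin_le_nhds (Metric.closedBall_mem_nhds t₀ hr)]
    with t ht htr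
  rw [Metric.mem_closedBall, Real.dist_eq] at htr
  simp only [smul_eq_mul, Real.norm_eq_abs]
  rcases le_total t₀ t with htt₀ | htt₀
  · rw [abs_of_nonneg (sub_nonneg.2 htt₀), mul_comm (t - t₀)]
    exact hsup ht₀ ht htt₀ hr₀ htr
  · rw [abs_of_nonpos (sub_nonpos.2 htt₀), ← abs_neg]
    convert hsup ht ht₀ htt₀ htr hr₀ using 1 <;> ring_nf

end SlopeOfSup

namespace IsCharacteristicOn

variable {u : ℝ → ℝ → ℝ} {S : Set ℝ} {x : ℝ → ℝ} {K : ℝ≥0}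

theorem continuousOn (hx : IsCharacteristicOn u S x) : ContinuousOn x S :=
  fun t ht => (hx t ht).continuousWithinAt

theorem lipschitzOnWith (hx : IsCharacteristicOn u S x) (hS : Convex ℝ S)
    (hu : ∀ t w, |u t w| ≤ K) : LipschitzOnWith K x S :=
  hS.lipschitzOnWith_of_nnnorm_hasDerivWithin_le hx fun t _ => by
    rw [← NNReal.coe_le_coe, coe_nnnorm, Real.norm_eq_abs]
    exact hu t (x t)

theorem neg (hx : IsCharacteristicOn u S x) :
    IsCharacteristicOn (fun t w => -u t (-w)) S (fun t => -x t) :=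
  fun t ht => by simpa using (hx t ht).fun_neg

theorem hasDerivAt (hx : IsCharacteristicOn u S x) {t : ℝ} (hS : S ∈ 𝓝 t) :
    HasDerivAt x (u t (x t)) t :=
  (hx t (mem_of_mem_nhds hS)).hasDerivAt hS

theorem eq_add_integral {a b : ℝ} (hx : IsCharacteristicOn u (Icc a b) x) (hu : Continuous (uncurry u))
    {t : ℝ} (ht : t ∈ Icc a b) : x t = x a + ∫ s in a..t, u s (x s) := by
  have hsub : Icc a t ⊆ Icc a b := Icc_subset_Icc_right ht.2
  have hcont : ContinuousOn (fun s => u s (x s)) (Icc a b) :=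
    hu.comp_continuousOn (continuousOn_id.prodMk hx.continuousOn)
  rw [intervalIntegral.integral_eq_sub_of_hasDerivAt_of_le ht.1 (hx.continuousOn.mono hsub)
    (fun s hs => hx.hasDerivAt (Icc_mem_nhds hs.1 (hs.2.trans_le ht.2)))
    ((hcont.mono hsub).intervalIntegrable_of_Icc ht.1)]
  ring

end IsCharacteristicOn

section FamilyOfCharacteristics

variable {ι : Type*} {u : ℝ → ℝ → ℝ} {S : Set ℝ} {X : ι → ℝ → ℝ} {K : ℝ≥0}

theorem hasUniformSlopeNear_of_isCharacteristicOn (hS : Convex ℝ S) {t₀ y₀ : ℝ}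
    (hu : ContinuousAt (uncurry u) (t₀, y₀)) (hX : ∀ i, IsCharacteristicOn u S (X i))
    (hlip : ∀ i, LipschitzOnWith K (X i) S) : HasUniformSlopeNear X S t₀ y₀ (u t₀ y₀) := by
  intro ε hε
  obtain ⟨η, hη, hu⟩ := Metric.continuousAt_iff.1 hu ε hε
  set δ := η / (2 * K + 2)
  have hδ : 0 < δ := by positivity
  have hδη : (2 * K + 2) * δ = η := mul_div_cancel₀ η (by positivity)
  have hK : (0 : ℝ) ≤ K := K.2
  refine ⟨δ, hδ, fun i a ha b hb hab hat hbt hXa => ?_⟩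
  have hab' : Icc a b ⊆ S := hS.ordConnected.out ha hb
  refine abs_sub_sub_mul_le_of_abs_deriv_sub_le hab (fun s hs => (hX i s (hab' hs)).mono hab')
    fun s hs => ?_
  -- solutions move at speed at most `K`, so they stay in the box where `u` is `ε`-close
  have hst : |s - t₀| ≤ δ := abs_le.2 ⟨by linarith [(abs_le.1 hat).1, hs.1],
    by linarith [(abs_le.1 hbt).2, hs.2]⟩
  have hsa : |X i s - X i a| ≤ K * (2 * δ) := (hlip i).abs_sub_le (hab' hs) ha |>.trans <|
    mul_le_mul_of_nonneg_left (by linarith [abs_sub_le s t₀ a, abs_sub_comm a t₀]) hK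
  have hXs : |X i s - y₀| < η := by
    linarith [abs_sub_le (X i s) (X i a) y₀]
  have := hu (x := (s, X i s)) <| by
    simp only [Prod.dist_eq, Real.dist_eq]
    exact max_lt (by linarith [mul_nonneg hK hδ.le]) hXs
  simpa only [Real.dist_eq, uncurry_apply_pair] using this.le

variable [Nonempty ι]

theorem IsCharacteristicOn.ciSup (hS : Convex ℝ S) (hu : Continuous (uncurry u))
    (hX : ∀ i, IsCharacteristicOn u S (X i)) (hlip : ∀ i, LipschitzOnWith K (X i) S)
    (hbdd : ∀ t ∈ S, BddAbove (range fun i => X i t)) :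
    IsCharacteristicOn u S (fun t => ⨆ i, X i t) := fun _ ht =>
  (hasUniformSlopeNear_of_isCharacteristicOn hS hu.continuousAt hX hlip).hasDerivWithinAt_ciSup
    hlip hbdd ht

theorem IsCharacteristicOn.ciInf (hS : Convex ℝ S) (hu : Continuous (uncurry u))
    (hX : ∀ i, IsCharacteristicOn u S (X i)) (hlip : ∀ i, LipschitzOnWith K (X i) S)
    (hbdd : ∀ t ∈ S, BddBelow (range fun i => X i t)) :
    IsCharacteristicOn u S (fun t => ⨅ i, X i t) := by
  have hu' : Continuous (uncurry fun t w => -u t (-w)) :=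
    (hu.comp (continuous_fst.prodMk continuous_snd.neg)).neg
  have := (IsCharacteristicOn.ciSup hS hu' (fun i => (hX i).neg) (fun i => (hlip i).neg)
    fun t ht => bddAbove_range_neg_iff.2 (hbdd t ht)).neg
  simpa [Real.iInf_eq_neg_iSup_neg] using this

end FamilyOfCharacteristics

theorem sup_inf_of_characteristics_is_characteristic_general
    {ι : Type*} [Nonempty ι] (T : ℝ)
    (u : ℝ → ℝ → ℝ) (hu_cont : Continuous (fun p : ℝ × ℝ => u p.1 p.2))
    (hu_bdd : ∃ M : ℝ, ∀ t x : ℝ, |u t x| ≤ M)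
    (x₀ : ℝ) (X : ι → ℝ → ℝ)
    (hX0 : ∀ i, X i 0 = x₀)
    (hX : ∀ i, ∀ t ∈ Icc (0:ℝ) T, HasDerivAt (X i) (u t (X i t)) t) :
    ((∀ t ∈ Icc (0:ℝ) T, BddAbove (range fun i => X i t)) ∧
      (∃ K : NNReal, LipschitzOnWith K (fun t => ⨆ i, X i t) (Icc 0 T)) ∧
      (∀ t ∈ Ioo (0:ℝ) T, DifferentiableAt ℝ (fun t => ⨆ i, X i t) t →
        deriv (fun t => ⨆ i, X i t) t = u t (⨆ i, X i t)) ∧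
      (∀ t ∈ Icc (0:ℝ) T,
        (⨆ i, X i t) = x₀ + ∫ s in (0:ℝ)..t, u s (⨆ i, X i s))) ∧
    ((∀ t ∈ Icc (0:ℝ) T, BddBelow (range fun i => X i t)) ∧
      (∃ K : NNReal, LipschitzOnWith K (fun t => ⨅ i, X i t) (Icc 0 T)) ∧
      (∀ t ∈ Ioo (0:ℝ) T, DifferentiableAt ℝ (fun t => ⨅ i, X i t) t →
        deriv (fun t => ⨅ i, X i t) t = u t (⨅ i, X i t)) ∧
      (∀ t ∈ Icc (0:ℝ) T,
        (⨅ i, X i t) = x₀ + ∫ s in (0:ℝ)..t, u s (⨅ i, X i s))) := by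
  obtain ⟨M, hM⟩ := hu_bdd
  have hchar : ∀ i, IsCharacteristicOn u (Icc 0 T) (X i) := fun i t ht =>
    (hX i t ht).hasDerivWithinAt
  have hlip : ∀ i, LipschitzOnWith M.toNNReal (X i) (Icc 0 T) := fun i =>
    (hchar i).lipschitzOnWith (convex_Icc 0 T) fun t w => (hM t w).trans M.le_coe_toNNReal
  have hrange0 : (range fun i => X i 0) = {x₀} := by simp only [hX0, range_const]
  have hmem0 {t : ℝ} (ht : t ∈ Icc 0 T) : (0 : ℝ) ∈ Icc 0 T := ⟨le_rfl, ht.1.trans ht.2⟩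
  have hbddAbove : ∀ t ∈ Icc 0 T, BddAbove (range fun i => X i t) := fun t ht =>
    bddAbove_range_of_lipschitzOnWith hlip (hmem0 ht) ht (hrange0 ▸ bddAbove_singleton)
  have hbddBelow : ∀ t ∈ Icc 0 T, BddBelow (range fun i => X i t) := fun t ht =>
    bddBelow_range_of_lipschitzOnWith hlip (hmem0 ht) ht (hrange0 ▸ bddBelow_singleton)
  have hsup := IsCharacteristicOn.ciSup (convex_Icc 0 T) hu_cont hchar hlip hbddAbove
  have hinf := IsCharacteristicOn.ciInf (convex_Icc 0 T) hu_cont hchar hlip hbddBelow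
  refine ⟨⟨hbddAbove, ⟨_, lipschitzOnWith_ciSup hlip hbddAbove⟩,
      fun t ht _ => (hsup.hasDerivAt (Icc_mem_nhds ht.1 ht.2)).deriv,
      fun t ht => by rw [hsup.eq_add_integral hu_cont ht]; simp only [hX0, ciSup_const]⟩,
    ⟨hbddBelow, ⟨_, lipschitzOnWith_ciInf hlip hbddBelow⟩,
      fun t ht _ => (hinf.hasDerivAt (Icc_mem_nhds ht.1 ht.2)).deriv,
      fun t ht => by rw [hinf.eq_add_integral hu_cont ht]; simp only [hX0, ciInf_const]⟩⟩

/-- Let `u : [0,T] × ℝ → ℝ` be continuous and bounded and let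
`{X i}` be a nonempty family of solutions of `ẋ = u(t,x)` on `[0,T]` with common initial
value `x₀` at time `0`. Then `y(t) = ⨆ i, X i t` is real-valued (the range is bounded
above), Lipschitz on `[0,T]`, satisfies `y' = u(t,y)` at every interior point of
differentiability, and `y(t) = x₀ + ∫₀ᵗ u(s, y(s)) ds`; similarly for
`z(t) = ⨅ i, X i t`. -/
theorem sup_inf_of_characteristics_is_characteristic
    {ι : Type*} [Nonempty ι] (T : ℝ) (hT : 0 < T)
    (u : ℝ → ℝ → ℝ) (hu_cont : Continuous (fun p : ℝ × ℝ => u p.1 p.2))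
    (hu_bdd : ∃ M : ℝ, ∀ t x : ℝ, |u t x| ≤ M)
    (x₀ : ℝ) (X : ι → ℝ → ℝ)
    (hX0 : ∀ i, X i 0 = x₀)
    (hX : ∀ i, ∀ t ∈ Icc (0:ℝ) T, HasDerivAt (X i) (u t (X i t)) t) :
    ((∀ t ∈ Icc (0:ℝ) T, BddAbove (range fun i => X i t)) ∧
      (∃ K : NNReal, LipschitzOnWith K (fun t => ⨆ i, X i t) (Icc 0 T)) ∧
      (∀ t ∈ Ioo (0:ℝ) T, DifferentiableAt ℝ (fun t => ⨆ i, X i t) t →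
        deriv (fun t => ⨆ i, X i t) t = u t (⨆ i, X i t)) ∧
      (∀ t ∈ Icc (0:ℝ) T,
        (⨆ i, X i t) = x₀ + ∫ s in (0:ℝ)..t, u s (⨆ i, X i s))) ∧
    ((∀ t ∈ Icc (0:ℝ) T, BddBelow (range fun i => X i t)) ∧
      (∃ K : NNReal, LipschitzOnWith K (fun t => ⨅ i, X i t) (Icc 0 T)) ∧
      (∀ t ∈ Ioo (0:ℝ) T, DifferentiableAt ℝ (fun t => ⨅ i, X i t) t →
        deriv (fun t => ⨅ i, X i t) t = u t (⨅ i, X i t)) ∧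
      (∀ t ∈ Icc (0:ℝ) T,
        (⨅ i, X i t) = x₀ + ∫ s in (0:ℝ)..t, u s (⨅ i, X i s))) :=
  sup_inf_of_characteristics_is_characteristic_general T u hu_cont hu_bdd x₀ X hX0 hX
end

section
/- Let K > 0 and let ω : [t₀,t₁] → ℝ be differentiable with ω'(t) ≥ −ω(t)² − K for all t ∈ [t₀,t₁]. If −√K·(t₁−t₀) + arctan(ω(t₀)/√K) > −π/2, then ω(t₁) ≥ √K · tan( −√K·(t₁−t₀) + arctan(ω(t₀)/√K) ). -/
/-!
With `s = √K`, the substitution `ω = s tan θ` turns `ω' ≥ -ω² - K` into `θ' ≥ -s`, i.e.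
`θ(t) + s t` is nondecreasing for `θ = arctan (ω / s)`. Hence
`θ(t₁) ≥ θ(t₀) - s (t₁ - t₀)`, and since `tan` is increasing on `(-π/2, π/2)` this gives the
bound as long as the right-hand side stays above `-π/2`.
-/

open Set Real

theorem hasDerivAt_arctan_div_add_mul {ω : ℝ → ℝ} {w s t : ℝ} (hs : s ≠ 0)
    (hω : HasDerivAt ω w t) :
    HasDerivAt (fun u => arctan (ω u / s) + s * u)
      (s * (w + ω t ^ 2 + s ^ 2) / (ω t ^ 2 + s ^ 2)) t := by
  refine (((hω.div_const s).arctan).add ((hasDerivAt_id t).const_mul s)).congr_deriv ?_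
  field_simp
  ring

theorem monotoneOn_arctan_div_add_mul_of_riccati {D : Set ℝ} (hD : Convex ℝ D)
    {ω ω' : ℝ → ℝ} {s : ℝ} (hs : 0 < s) (hderiv : ∀ t ∈ D, HasDerivAt ω (ω' t) t)
    (hineq : ∀ t ∈ D, -(ω t) ^ 2 - s ^ 2 ≤ ω' t) :
    MonotoneOn (fun t => arctan (ω t / s) + s * t) D := by
  have hg := fun t ht => hasDerivAt_arctan_div_add_mul hs.ne' (hderiv t ht)
  refine monotoneOn_of_hasDerivWithinAt_nonneg hD
    (fun t ht => (hg t ht).continuousAt.continuousWithinAt)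
    (fun t ht => (hg t (interior_subset ht)).hasDerivWithinAt) fun t ht => ?_
  have hnum : 0 ≤ ω' t + ω t ^ 2 + s ^ 2 := by linarith [hineq t (interior_subset ht)]
  positivity

theorem tan_le_of_le_arctan {θ x : ℝ} (hθ : -(π / 2) < θ) (h : θ ≤ arctan x) : tan θ ≤ x := by
  simpa only [tan_arctan] using
    strictMonoOn_tan.monotoneOn ⟨hθ, h.trans_lt (arctan_lt_pi_div_two x)⟩
      ⟨neg_pi_div_two_lt_arctan x, arctan_lt_pi_div_two x⟩ h

/-- Riccati comparison estimate: if `ω' ≥ −ω² − K` on `[t₀,t₁]` and the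
comparison solution does not blow up, i.e.
`−√K (t₁−t₀) + arctan(ω(t₀)/√K) > −π/2`, then
`ω(t₁) ≥ √K · tan(−√K (t₁−t₀) + arctan(ω(t₀)/√K))`. -/
theorem riccati_comparison_estimate
    (K : ℝ) (hK : 0 < K) (t₀ t₁ : ℝ) (ht : t₀ ≤ t₁)
    (ω ω' : ℝ → ℝ)
    (hderiv : ∀ t ∈ Icc t₀ t₁, HasDerivAt ω (ω' t) t)
    (hineq : ∀ t ∈ Icc t₀ t₁, ω' t ≥ -(ω t) ^ 2 - K)
    (hcmp : -Real.sqrt K * (t₁ - t₀) + Real.arctan (ω t₀ / Real.sqrt K) > -(π / 2)) :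
    ω t₁ ≥ Real.sqrt K *
      Real.tan (-Real.sqrt K * (t₁ - t₀) + Real.arctan (ω t₀ / Real.sqrt K)) := by
  have hs : 0 < √K := sqrt_pos.mpr hK
  have hmono := monotoneOn_arctan_div_add_mul_of_riccati (convex_Icc t₀ t₁) hs hderiv
    (by simpa only [sq_sqrt hK.le, ge_iff_le] using hineq)
  have hθ : -√K * (t₁ - t₀) + arctan (ω t₀ / √K) ≤ arctan (ω t₁ / √K) := by
    have := hmono (left_mem_Icc.mpr ht) (right_mem_Icc.mpr ht) ht
    linarith
  have htan := tan_le_of_le_arctan hcmp hθ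
  calc √K * tan (-√K * (t₁ - t₀) + arctan (ω t₀ / √K))
      ≤ √K * (ω t₁ / √K) := mul_le_mul_of_nonneg_left htan hs.le
    _ = ω t₁ := mul_div_cancel₀ _ hs.ne'
end

section
/- Let t > 0, N > 0, and let u : [0,t] × ℝ → ℝ be continuous and bounded. Let ζ₀ ∈ ℝ and assume that for every η₀ ∈ (ζ₀ − 1/N, ζ₀) ∪ (ζ₀, ζ₀ + 1/N), every characteristic η(·) of u with η(0) = η₀, every characteristic ζ(·) of u with ζ(0) = ζ₀, and every s ∈ [0,t] with η(s) ≠ ζ(s), the difference quotient ω(s) := (u(s,η(s)) − u(s,ζ(s)))/(η(s) − ζ(s)) satisfies −N ≤ ω(s) ≤ N. Then the characteristic of u emanating from ζ₀ is unique on [0,t]: any two characteristics ζ₁(·), ζ₂(·) with ζ₁(0) = ζ₂(0) = ζ₀ coincide on [0,t]. -/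
/-!
Two characteristics `c₁, c₂` from `ζ₀` are compared with a characteristic `η` from `ζ₀ + ε`: the
quotient bound gives `|(η - cᵢ)'| ≤ N |η - cᵢ|`, so by Gronwall `|η - cᵢ| ≤ ε e^{Nt}`, hence
`|c₁ - c₂| ≤ 2ε e^{Nt}` for every small `ε > 0`.

The characteristic `η` is provided by Peano's theorem, which in one space dimension has a monotone
proof: the inf-convolutions `u_K(s, x) = inf_y (u(s, y) + K |x - y|)` are `K`-Lipschitz minorants
of `u` increasing to `u` as `K → ∞`, so by comparison their (Picard–Lindelöf) characteristics
increase with `K`, and the pointwise limit solves the integral equation by dominated convergence.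
-/

open Set Filter Topology NNReal
open scoped Interval

lemma bddBelow_range_of_abs_le {φ : ℝ → ℝ} {M : ℝ} (hM : ∀ y, |φ y| ≤ M) :
    BddBelow (range φ) :=
  ⟨-M, by rintro _ ⟨y, rfl⟩; exact neg_le_of_abs_le (hM y)⟩

noncomputable def infConv (φ : ℝ → ℝ) (K : ℝ≥0) (x : ℝ) : ℝ :=
  ⨅ y, φ y + K * |x - y|

section InfConv

variable {φ : ℝ → ℝ} {K : ℝ≥0} {M : ℝ}

lemma bddBelow_range_add_mul_abs (hφ : BddBelow (range φ)) (x : ℝ) :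
    BddBelow (range fun y => φ y + K * |x - y|) := by
  obtain ⟨m, hm⟩ := hφ
  refine ⟨m, ?_⟩
  rintro _ ⟨y, rfl⟩
  exact le_add_of_le_of_nonneg (hm ⟨y, rfl⟩) (by positivity)

lemma infConv_le_add_mul_abs (hφ : BddBelow (range φ)) (x y : ℝ) :
    infConv φ K x ≤ φ y + K * |x - y| :=
  ciInf_le (bddBelow_range_add_mul_abs hφ x) y

lemma infConv_le_self (hφ : BddBelow (range φ)) (x : ℝ) : infConv φ K x ≤ φ x := by
  simpa using infConv_le_add_mul_abs (K := K) hφ x x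

lemma abs_infConv_le (hM : ∀ y, |φ y| ≤ M) (x : ℝ) : |infConv φ K x| ≤ M := by
  have hφ := bddBelow_range_of_abs_le hM
  refine abs_le.2 ⟨le_ciInf fun y => ?_, (infConv_le_self hφ x).trans (le_of_abs_le (hM x))⟩
  exact le_add_of_le_of_nonneg (neg_le_of_abs_le (hM y)) (by positivity)

lemma lipschitzWith_infConv (hφ : BddBelow (range φ)) : LipschitzWith K (infConv φ K) := by
  refine LipschitzWith.of_le_add_mul K fun x x' => ?_
  rw [← sub_le_iff_le_add]
  refine le_ciInf fun y => sub_le_iff_le_add.2 ?_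
  have := abs_sub_le x x' y
  rw [Real.dist_eq]
  nlinarith [infConv_le_add_mul_abs (K := K) hφ x y, K.2]

lemma monotone_infConv (hφ : BddBelow (range φ)) (x : ℝ) : Monotone fun K => infConv φ K x :=
  fun _ _ hKK' => ciInf_mono (bddBelow_range_add_mul_abs hφ x) fun y => by gcongr

lemma infConv_eq_sInf_image_closedBall (hM : ∀ y, |φ y| ≤ M) (hK : 0 < K) (x : ℝ) :
    infConv φ K x =
      sInf ((fun z => φ (x - z) + K * |z|) '' Metric.closedBall 0 (2 * M / K)) := by
  have hφ := bddBelow_range_of_abs_le hM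
  have h0 : (0 : ℝ) ∈ Metric.closedBall 0 (2 * M / K) :=
    Metric.mem_closedBall_self (by have := (abs_nonneg _).trans (hM 0); positivity)
  have hbdd : BddBelow ((fun z => φ (x - z) + K * |z|) '' Metric.closedBall 0 (2 * M / K)) := by
    refine ⟨-M, ?_⟩
    rintro _ ⟨z, -, rfl⟩
    exact le_add_of_le_of_nonneg (neg_le_of_abs_le (hM (x - z))) (by positivity)
  apply le_antisymm
  · refine le_csInf ⟨_, mem_image_of_mem _ h0⟩ ?_
    rintro _ ⟨z, -, rfl⟩
    simpa using infConv_le_add_mul_abs (K := K) hφ x (x - z)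
  · refine le_ciInf fun y => ?_
    by_cases hy : x - y ∈ Metric.closedBall 0 (2 * M / K)
    · exact (csInf_le hbdd ⟨x - y, hy, rfl⟩).trans (by simp)
    · refine (csInf_le hbdd ⟨0, h0, rfl⟩).trans ?_
      rw [Metric.mem_closedBall, dist_zero_right, Real.norm_eq_abs, not_le,
        div_lt_iff₀' (by exact_mod_cast hK)] at hy
      simp only [sub_zero, abs_zero, mul_zero, add_zero]
      linarith [le_of_abs_le (hM x), neg_le_of_abs_le (hM y)]

lemma tendsto_infConv_atTop (hM : ∀ y, |φ y| ≤ M) {x : ℝ} (hx : ContinuousAt φ x) :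
    Tendsto (fun K => infConv φ K x) atTop (𝓝 (φ x)) := by
  have hφ := bddBelow_range_of_abs_le hM
  refine tendsto_order.2
    ⟨fun a ha => ?_, fun a ha => .of_forall fun K => (infConv_le_self hφ x).trans_lt ha⟩
  obtain ⟨b, hab, hb⟩ := exists_between ha
  obtain ⟨δ, hδ, hδb⟩ := Metric.eventually_nhds_iff.1 (hx.eventually (lt_mem_nhds hb))
  filter_upwards [eventually_ge_atTop ((M + b) / δ).toNNReal] with K hK
  refine hab.trans_le (le_ciInf fun y => ?_)
  by_cases hy : dist y x < δ
  · exact (hδb hy).le.trans (le_add_of_nonneg_right (by positivity))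
  · rw [Real.toNNReal_le_iff_le_coe, div_le_iff₀ hδ] at hK
    rw [not_lt, Real.dist_eq, abs_sub_comm] at hy
    nlinarith [neg_le_of_abs_le (hM y), K.2]

lemma tendsto_infConv {ι : Type*} {l : Filter ι} {K : ι → ℝ≥0} {y : ι → ℝ} {x : ℝ}
    (hM : ∀ y, |φ y| ≤ M) (hx : ContinuousAt φ x) (hK : Tendsto K l atTop)
    (hy : Tendsto y l (𝓝 x)) : Tendsto (fun i => infConv φ (K i) (y i)) l (𝓝 (φ x)) := by
  have hφ := bddBelow_range_of_abs_le hM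
  refine tendsto_order.2 ⟨fun a ha => ?_, fun a ha => ?_⟩
  · obtain ⟨K₀, hK₀⟩ := ((tendsto_infConv_atTop hM hx).eventually (lt_mem_nhds ha)).exists
    filter_upwards [((lipschitzWith_infConv hφ).continuous.tendsto x |>.comp hy).eventually
      (lt_mem_nhds hK₀), hK.eventually (eventually_ge_atTop K₀)] with i hi hKi
    exact hi.trans_le (monotone_infConv hφ _ hKi)
  · filter_upwards [(hx.tendsto.comp hy).eventually (gt_mem_nhds ha)] with i hi
    exact (infConv_le_self hφ _).trans_lt hi

end InfConv

lemma continuous_infConv {u : ℝ → ℝ → ℝ} {M : ℝ} {K : ℝ≥0}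
    (hu : Continuous fun p : ℝ × ℝ => u p.1 p.2) (hM : ∀ s x, |u s x| ≤ M) (hK : 0 < K) :
    Continuous fun p : ℝ × ℝ => infConv (u p.1) K p.2 := by
  simp_rw [infConv_eq_sInf_image_closedBall (hM _) hK]
  exact (isCompact_closedBall _ _).continuous_sInf
    (f := fun (p : ℝ × ℝ) z => u p.1 (p.2 - z) + K * |z|) (by fun_prop)

lemma nonpos_of_eventually_le_mul {a C : ℝ} (h : ∀ᶠ ε in 𝓝[>] 0, a ≤ ε * C) : a ≤ 0 := by
  have : Tendsto (fun ε : ℝ => ε * C) (𝓝[>] 0) (𝓝 0) := by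
    simpa using ((continuous_mul_const C).tendsto 0).mono_left nhdsWithin_le_nhds
  exact ge_of_tendsto this h

def IsCharacteristic (u : ℝ → ℝ → ℝ) (t : ℝ) (c : ℝ → ℝ) : Prop :=
  ∀ s ∈ Icc (0 : ℝ) t, HasDerivAt c (u s (c s)) s

namespace IsCharacteristic

variable {u v w : ℝ → ℝ → ℝ} {t M : ℝ} {c d : ℝ → ℝ}

lemma continuousOn (hc : IsCharacteristic u t c) : ContinuousOn c (Icc 0 t) :=
  fun s hs => (hc s hs).continuousAt.continuousWithinAt

lemma hasDerivWithinAt_Ici (hc : IsCharacteristic u t c) :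
    ∀ s ∈ Ico (0 : ℝ) t, HasDerivWithinAt c (u s (c s)) (Ici s) s :=
  fun s hs => (hc s (Ico_subset_Icc_self hs)).hasDerivWithinAt

lemma dist_le (hM : ∀ s x, |u s x| ≤ M) (hc : IsCharacteristic u t c) :
    ∀ s ∈ Icc (0 : ℝ) t, ∀ s' ∈ Icc (0 : ℝ) t, dist (c s) (c s') ≤ M * dist s s' :=
  fun _ hs _ hs' => (convex_Icc 0 t).norm_image_sub_le_of_norm_hasDerivWithin_le
    (fun r hr => (hc r hr).hasDerivWithinAt) (fun r _ => hM r (c r)) hs' hs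

lemma continuousOn_velocity (hu : Continuous fun p : ℝ × ℝ => u p.1 p.2)
    (hc : IsCharacteristic u t c) : ContinuousOn (fun s => u s (c s)) (Icc 0 t) :=
  hu.comp_continuousOn (continuousOn_id.prodMk hc.continuousOn)

lemma integral_eq (hu : Continuous fun p : ℝ × ℝ => u p.1 p.2) (hc : IsCharacteristic u t c) :
    ∀ s ∈ Icc (0 : ℝ) t, c s = c 0 + ∫ r in (0 : ℝ)..s, u r (c r) := by
  intro s hs
  have hsub : uIcc 0 s ⊆ Icc 0 t := by rw [uIcc_of_le hs.1]; exact Icc_subset_Icc_right hs.2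
  rw [intervalIntegral.integral_eq_sub_of_hasDerivAt (fun r hr => hc r (hsub hr))
    ((hc.continuousOn_velocity hu).mono hsub).intervalIntegrable]
  ring

lemma abs_sub_le_mul_exp {N : ℝ} (hc : IsCharacteristic u t c) (hd : IsCharacteristic u t d)
    (hN : ∀ s ∈ Ico (0 : ℝ) t, |u s (c s) - u s (d s)| ≤ N * |c s - d s|) :
    ∀ s ∈ Icc (0 : ℝ) t, |c s - d s| ≤ |c 0 - d 0| * Real.exp (N * s) := by
  intro s hs
  simpa [gronwallBound_ε0] using norm_le_gronwallBound_of_norm_deriv_right_le (K := N) (ε := 0)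
    (hc.continuousOn.sub hd.continuousOn)
    (fun r hr => (hc.hasDerivWithinAt_Ici r hr).sub (hd.hasDerivWithinAt_Ici r hr)) le_rfl
    (fun r hr => by simpa using hN r hr) s hs

lemma le_of_le_of_lipschitzWith {K : ℝ≥0} (hc : IsCharacteristic v t c)
    (hd : IsCharacteristic w t d) (hvw : ∀ s x, v s x ≤ w s x) (hw : ∀ s, LipschitzWith K (w s))
    (h0 : c 0 ≤ d 0) :
    ∀ s ∈ Icc (0 : ℝ) t, c s ≤ d s := by
  intro s hs
  rw [← sub_nonpos]
  refine nonpos_of_eventually_le_mul (C := Real.exp ((K + 1) * s))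
    (eventually_mem_nhdsWithin.mono fun ε (hε : 0 < ε) => ?_)
  rw [mul_comm]
  -- the barrier `ε e^{(K+1)s}` grows strictly faster than `c - d` can where they touch
  refine image_le_of_deriv_right_lt_deriv_boundary (hc.continuousOn.sub hd.continuousOn)
    (fun r hr => (hc.hasDerivWithinAt_Ici r hr).sub (hd.hasDerivWithinAt_Ici r hr))
    (B := fun r => Real.exp ((K + 1) * r) * ε) (by simp only [Pi.sub_apply, mul_zero, Real.exp_zero, one_mul]; linarith)
    (fun r => (((hasDerivAt_id r).const_mul _).exp.mul_const ε)) (fun r hr hr' => ?_) hs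
  have hlip : w r (c r) - w r (d r) ≤ K * |c r - d r| :=
    (le_abs_self _).trans (by simpa [Real.dist_eq] using (hw r).dist_le_mul (c r) (d r))
  simp only [Pi.sub_apply] at hr'
  simp only [id, mul_one]
  rw [hr', abs_of_pos (by positivity)] at hlip
  nlinarith [hvw r (c r), Real.exp_pos ((K + 1) * r)]

end IsCharacteristic

lemma exists_isCharacteristic_of_lipschitzWith {v : ℝ → ℝ → ℝ} {M : ℝ} {K : ℝ≥0}
    (hv : ∀ x, Continuous (v · x)) (hM : ∀ s x, |v s x| ≤ M) (hK : ∀ s, LipschitzWith K (v s))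
    (t x₀ : ℝ) : ∃ c : ℝ → ℝ, c 0 = x₀ ∧ IsCharacteristic v t c := by
  set T := |t| + 1
  have hT : 0 < T := by positivity
  have hpl : IsPicardLindelof v (tmin := -T) (tmax := T) ⟨0, by constructor <;> linarith⟩ x₀
      (M.toNNReal * T.toNNReal) 0 M.toNNReal K :=
    { lipschitzOnWith := fun s _ => (hK s).lipschitzOnWith
      continuousOn := fun x _ => (hv x).continuousOn
      norm_le := fun s _ x _ => (hM s x).trans (Real.le_coe_toNNReal M)
      mul_max_le := by simp [Real.coe_toNNReal _ hT.le] }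
  obtain ⟨c, hc0, hc⟩ := hpl.exists_eq_forall_mem_Icc_hasDerivWithinAt₀
  refine ⟨c, hc0, fun s hs => ?_⟩
  have hsT : s ∈ Ioo (-T) T := by
    constructor <;> linarith [hs.1, hs.2, le_abs_self t]
  exact (hc s (Ioo_subset_Icc_self hsT)).hasDerivAt (Icc_mem_nhds hsT.1 hsT.2)

lemma exists_isCharacteristic_of_integral_eq {u : ℝ → ℝ → ℝ} {t η₀ : ℝ} {x : ℝ → ℝ}
    (hu : Continuous fun p : ℝ × ℝ => u p.1 p.2) (ht : 0 ≤ t) (hx : ContinuousOn x (Icc 0 t))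
    (hx_eq : ∀ s ∈ Icc (0 : ℝ) t, x s = η₀ + ∫ r in (0 : ℝ)..s, u r (x r)) :
    ∃ c : ℝ → ℝ, c 0 = η₀ ∧ IsCharacteristic u t c := by
  -- extend `x` constantly outside `[0, t]`, so that the integrand is continuous on all of `ℝ`
  set g : ℝ → ℝ := fun r => u r (x (projIcc 0 t ht r))
  have hg : Continuous g := hu.comp (continuous_id.prodMk
    (hx.comp_continuous continuous_projIcc.subtype_val fun r => (projIcc 0 t ht r).2))
  have hgx : ∀ s ∈ Icc (0 : ℝ) t, ∫ r in (0 : ℝ)..s, g r = x s - η₀ := fun s hs => by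
    rw [hx_eq s hs, add_sub_cancel_left]
    refine intervalIntegral.integral_congr fun r hr => ?_
    rw [uIcc_of_le hs.1] at hr
    simp [g, projIcc_of_mem ht ⟨hr.1, hr.2.trans hs.2⟩]
  refine ⟨fun s => η₀ + ∫ r in (0 : ℝ)..s, g r, by simp, fun s hs => ?_⟩
  have := ((hg.integral_hasStrictDerivAt 0 s).hasDerivAt.const_add η₀)
  simpa [g, hgx s hs, projIcc_of_mem ht hs] using this

lemma integral_eq_of_tendsto_isCharacteristic {u : ℝ → ℝ → ℝ} {v : ℕ → ℝ → ℝ → ℝ}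
    {f : ℕ → ℝ → ℝ} {x : ℝ → ℝ} {t M η₀ : ℝ} (hv : ∀ n, Continuous fun p : ℝ × ℝ => v n p.1 p.2)
    (hM : ∀ n s y, |v n s y| ≤ M) (hf : ∀ n, IsCharacteristic (v n) t (f n))
    (hf0 : ∀ n, f n 0 = η₀) (hfx : ∀ s ∈ Icc (0 : ℝ) t, Tendsto (f · s) atTop (𝓝 (x s)))
    (hvu : ∀ s ∈ Icc (0 : ℝ) t, Tendsto (fun n => v n s (f n s)) atTop (𝓝 (u s (x s)))) :
    ∀ s ∈ Icc (0 : ℝ) t, x s = η₀ + ∫ r in (0 : ℝ)..s, u r (x r) := by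
  intro s hs
  have hsub : Ι 0 s ⊆ Icc 0 t := by
    rw [uIoc_of_le hs.1]; exact Ioc_subset_Icc_self.trans (Icc_subset_Icc_right hs.2)
  have hint : Tendsto (fun n => ∫ r in (0 : ℝ)..s, v n r (f n r)) atTop
      (𝓝 (∫ r in (0 : ℝ)..s, u r (x r))) :=
    intervalIntegral.tendsto_integral_filter_of_dominated_convergence (fun _ => M)
      (.of_forall fun n => (((hf n).continuousOn_velocity (hv n)).mono hsub).aestronglyMeasurable
        measurableSet_uIoc)
      (.of_forall fun n => .of_forall fun r _ => hM n r (f n r)) intervalIntegrable_const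
      (.of_forall fun r hr => hvu r (hsub hr))
  refine tendsto_nhds_unique (hfx s hs) ?_
  have hfs : (fun n => f n s) = fun n => η₀ + ∫ r in (0 : ℝ)..s, v n r (f n r) :=
    funext fun n => by rw [← hf0 n]; exact (hf n).integral_eq (hv n) s hs
  rw [hfs]
  exact tendsto_const_nhds.add hint

theorem exists_isCharacteristic {u : ℝ → ℝ → ℝ} {t M : ℝ}
    (hu : Continuous fun p : ℝ × ℝ => u p.1 p.2) (hM : ∀ s x, |u s x| ≤ M) (ht : 0 ≤ t)
    (η₀ : ℝ) : ∃ c : ℝ → ℝ, c 0 = η₀ ∧ IsCharacteristic u t c := by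
  have hbdd : ∀ s, BddBelow (range (u s)) := fun s => bddBelow_range_of_abs_le (hM s)
  let v : ℕ → ℝ → ℝ → ℝ := fun n s => infConv (u s) (n + 1 : ℕ)
  have hv : ∀ n, Continuous fun p : ℝ × ℝ => v n p.1 p.2 :=
    fun n => continuous_infConv hu hM (by positivity)
  have hvM : ∀ n s y, |v n s y| ≤ M := fun n s => abs_infConv_le (hM s)
  have hvK : ∀ (n : ℕ) s, LipschitzWith (n + 1 : ℕ) (v n s) :=
    fun n s => lipschitzWith_infConv (hbdd s)
  choose f hf0 hf using fun n => exists_isCharacteristic_of_lipschitzWith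
    (fun y => (hv n).comp (Continuous.prodMk_left y)) (hvM n) (hvK n) t η₀
  have hmono : ∀ s ∈ Icc (0 : ℝ) t, Monotone (f · s) := fun s hs n m hnm =>
    (hf n).le_of_le_of_lipschitzWith (hf m) (fun r y => monotone_infConv (hbdd r) y (by gcongr))
      (hvK m) (by rw [hf0, hf0]) s hs
  have hbddAbove : ∀ s ∈ Icc (0 : ℝ) t, BddAbove (range (f · s)) := by
    refine fun s hs => ⟨η₀ + M * t, ?_⟩
    rintro _ ⟨n, rfl⟩
    have := (hf n).dist_le (hvM n) s hs 0 ⟨le_rfl, ht⟩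
    rw [hf0, Real.dist_eq, Real.dist_eq, sub_zero, abs_of_nonneg hs.1] at this
    have hM0 : 0 ≤ M := (abs_nonneg _).trans (hM 0 0)
    linarith [le_abs_self (f n s - η₀), mul_le_mul_of_nonneg_left hs.2 hM0]
  let x : ℝ → ℝ := fun s => ⨆ n, f n s
  have hfx : ∀ s ∈ Icc (0 : ℝ) t, Tendsto (f · s) atTop (𝓝 (x s)) :=
    fun s hs => tendsto_atTop_ciSup (hmono s hs) (hbddAbove s hs)
  have hx : ContinuousOn x (Icc 0 t) := by
    refine (LipschitzOnWith.of_dist_le' (K := M) fun s hs s' hs' => ?_).continuousOn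
    exact le_of_tendsto ((hfx s hs).dist (hfx s' hs'))
      (.of_forall fun n => (hf n).dist_le (hvM n) s hs s' hs')
  refine exists_isCharacteristic_of_integral_eq hu ht hx
    (integral_eq_of_tendsto_isCharacteristic hv hvM hf hf0 hfx fun s hs => ?_)
  exact tendsto_infConv (hM s) (hu.comp (Continuous.prodMk_right s)).continuousAt
    (tendsto_natCast_atTop_atTop.comp (tendsto_add_atTop_nat 1)) (hfx s hs)

lemma abs_sub_le_mul_abs_sub_of_div_mem_Icc {f : ℝ → ℝ} {x y N : ℝ}
    (h : x ≠ y → (f x - f y) / (x - y) ∈ Icc (-N) N) : |f x - f y| ≤ N * |x - y| := by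
  rcases eq_or_ne x y with rfl | hxy
  · simp
  calc |f x - f y| = |(f x - f y) / (x - y)| * |x - y| := by
        rw [← abs_mul, div_mul_cancel₀ _ (sub_ne_zero.2 hxy)]
    _ ≤ N * |x - y| := by gcongr; exact abs_le.2 (h hxy)

/-- If all difference quotients of a continuous bounded velocity field `u`
along pairs of characteristics started at `ζ₀` and at nearby points
`η₀ ∈ (ζ₀ − 1/N, ζ₀) ∪ (ζ₀, ζ₀ + 1/N)` are bounded by `N` in absolute value on `[0,t]`,
then the characteristic emanating from `ζ₀` is unique on `[0,t]`. -/
theorem uniqueness_of_characteristic_from_bounded_quotients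
    (t N : ℝ) (ht : 0 < t) (hN : 0 < N)
    (u : ℝ → ℝ → ℝ) (hu_cont : Continuous (fun p : ℝ × ℝ => u p.1 p.2))
    (hu_bdd : ∃ M : ℝ, ∀ s x : ℝ, |u s x| ≤ M)
    (ζ₀ : ℝ)
    (hω : ∀ η₀ : ℝ, η₀ ≠ ζ₀ → |η₀ - ζ₀| < 1 / N →
      ∀ cη cζ : ℝ → ℝ, cη 0 = η₀ → cζ 0 = ζ₀ →
        (∀ s ∈ Icc (0:ℝ) t, HasDerivAt cη (u s (cη s)) s) →
        (∀ s ∈ Icc (0:ℝ) t, HasDerivAt cζ (u s (cζ s)) s) →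
        ∀ s ∈ Icc (0:ℝ) t, cη s ≠ cζ s →
          -N ≤ (u s (cη s) - u s (cζ s)) / (cη s - cζ s) ∧
          (u s (cη s) - u s (cζ s)) / (cη s - cζ s) ≤ N) :
    ∀ c₁ c₂ : ℝ → ℝ, c₁ 0 = ζ₀ → c₂ 0 = ζ₀ →
      (∀ s ∈ Icc (0:ℝ) t, HasDerivAt c₁ (u s (c₁ s)) s) →
      (∀ s ∈ Icc (0:ℝ) t, HasDerivAt c₂ (u s (c₂ s)) s) →
      EqOn c₁ c₂ (Icc 0 t) := by
  obtain ⟨M, hM⟩ := hu_bdd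
  intro c₁ c₂ hc₁0 hc₂0 hc₁ hc₂ s hs
  have hclose : ∀ ε ∈ Ioo 0 (1 / N), |c₁ s - c₂ s| ≤ ε * (2 * Real.exp (N * t)) := by
    rintro ε ⟨hε, hεN⟩
    obtain ⟨η, hη0, hη⟩ := exists_isCharacteristic hu_cont hM ht.le (ζ₀ + ε)
    have hnear : ∀ c : ℝ → ℝ, c 0 = ζ₀ → IsCharacteristic u t c →
        |η s - c s| ≤ ε * Real.exp (N * t) := by
      intro c hc0 hc
      have hlip := fun r hr => abs_sub_le_mul_abs_sub_of_div_mem_Icc (hω (ζ₀ + ε)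
        (lt_add_of_pos_right ζ₀ hε).ne' (by rwa [add_sub_cancel_left, abs_of_pos hε])
        η c hη0 hc0 hη hc r (Ico_subset_Icc_self hr))
      calc |η s - c s| ≤ |η 0 - c 0| * Real.exp (N * s) := hη.abs_sub_le_mul_exp hc hlip s hs
        _ ≤ ε * Real.exp (N * t) := by
          rw [hη0, hc0, add_sub_cancel_left, abs_of_pos hε]; gcongr; exact hs.2
    linarith [abs_sub_le (c₁ s) (η s) (c₂ s), abs_sub_comm (c₁ s) (η s), hnear c₁ hc₁0 hc₁,
      hnear c₂ hc₂0 hc₂]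
  have := nonpos_of_eventually_le_mul (mem_of_superset (Ioo_mem_nhdsGT (by positivity)) hclose)
  exact sub_eq_zero.1 (abs_nonpos_iff.1 this)
end

section
/- Let T > 0, V₁ > 0, and let U, P̄ ≥ 0. Let v, f, g : [0,T] → ℝ with f, g continuous, |f(t)| ≤ U and |g(t)| ≤ P̄ for all t, and v differentiable with v'(t) = f(t) − (1/2) v(t)² − g(t) on [0,T]. Assume that either v(t) ≥ V₁ for all t ∈ [0,T] or v(t) ≤ −V₁ for all t ∈ [0,T], and set M(t) := exp(∫₀ᵗ v(s) ds). Then for every t ∈ [0,T]: e^{−(2t/V₁)(U+P̄)} ≤ v(t)² M(t) / v(0)² ≤ e^{(2t/V₁)(U+P̄)}. -/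
open Set

/-!
Along the solution, `F = log (v²) + ∫₀ᵗ v` is the logarithm of `v² M`, and the equation
`v' = f − v²/2 − g` makes the `v²` terms cancel in its derivative: `F' = 2v'/v + v = 2(f − g)/v`.
Since `|v| ≥ V₁`, this derivative is bounded by `2(U + Pb)/V₁`, so the mean value inequality bounds
`|F t − F 0|` by `(2t/V₁)(U + Pb)`, and exponentiating gives both estimates.
-/

open Real

lemma le_abs_of_forall_le_or_forall_le_neg {α : Type*} {s : Set α} {v : α → ℝ} {c : ℝ}
    (h : (∀ t ∈ s, c ≤ v t) ∨ (∀ t ∈ s, v t ≤ -c)) : ∀ t ∈ s, c ≤ |v t| := by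
  intro t ht
  rcases h with h | h
  · exact (h t ht).trans (le_abs_self _)
  · exact le_abs'.mpr (Or.inl (h t ht))

lemma hasDerivWithinAt_log_sq_add_integral {v : ℝ → ℝ} {a b t v' : ℝ}
    (hvc : ContinuousOn v (Icc a b)) (ht : t ∈ Icc a b) (hvt : HasDerivAt v v' t)
    (hne : v t ≠ 0) :
    HasDerivWithinAt (fun s => log (v s ^ 2) + ∫ x in a..s, v x) (2 * v' / v t + v t)
      (Icc a b) t := by
  have hlog : HasDerivAt (fun s => log (v s ^ 2)) (2 * v' / v t) t := by
    convert (hvt.fun_pow 2).log (pow_ne_zero 2 hne) using 1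
    field_simp
    ring
  have hint : IntervalIntegrable v MeasureTheory.volume a t :=
    (hvc.mono (by rw [uIcc_of_le ht.1]; exact Icc_subset_Icc_right ht.2)).intervalIntegrable
  have : Fact (t ∈ Icc a b) := ⟨ht⟩
  exact hlog.hasDerivWithinAt.add <| intervalIntegral.integral_hasDerivWithinAt_right hint
    (hvc.stronglyMeasurableAtFilter_nhdsWithin measurableSet_Icc t) (hvc t ht)

lemma sq_mul_exp_integral_div_sq_mem_Icc {v v' : ℝ → ℝ} {a b C : ℝ}
    (hv : ∀ t ∈ Icc a b, HasDerivAt v (v' t) t) (hne : ∀ t ∈ Icc a b, v t ≠ 0)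
    (hC : ∀ t ∈ Icc a b, |2 * v' t / v t + v t| ≤ C) :
    ∀ t ∈ Icc a b, v t ^ 2 * exp (∫ s in a..t, v s) / v a ^ 2 ∈
      Icc (exp (-(C * (t - a)))) (exp (C * (t - a))) := by
  intro t ht
  set F : ℝ → ℝ := fun s => log (v s ^ 2) + ∫ x in a..s, v x
  have hvc : ContinuousOn v (Icc a b) := fun s hs => (hv s hs).continuousAt.continuousWithinAt
  have ha : a ∈ Icc a b := ⟨le_rfl, ht.1.trans ht.2⟩
  have hF : |F t - F a| ≤ C * (t - a) :=
    norm_image_sub_le_of_norm_deriv_le_segment'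
      (fun s hs => hasDerivWithinAt_log_sq_add_integral hvc hs (hv s hs) (hne s hs))
      (fun s hs => hC s (Ico_subset_Icc_self hs)) t ht
  have hexp : v t ^ 2 * exp (∫ s in a..t, v s) / v a ^ 2 = exp (F t - F a) := by
    simp only [F, intervalIntegral.integral_same, add_zero, exp_sub, exp_add,
      exp_log (sq_pos_of_ne_zero (hne t ht)), exp_log (sq_pos_of_ne_zero (hne a ha))]
  rw [hexp]
  exact ⟨exp_le_exp.mpr (neg_le_of_abs_le hF), exp_le_exp.mpr (le_of_abs_le hF)⟩

theorem derivative_flow_product_estimate_general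
    (T V₁ U Pb : ℝ) (hV₁ : 0 < V₁)
    (v f g : ℝ → ℝ)
    (hf_bdd : ∀ t ∈ Icc (0:ℝ) T, |f t| ≤ U)
    (hg_bdd : ∀ t ∈ Icc (0:ℝ) T, |g t| ≤ Pb)
    (hv : ∀ t ∈ Icc (0:ℝ) T, HasDerivAt v (f t - (1 / 2) * (v t) ^ 2 - g t) t)
    (hsign : (∀ t ∈ Icc (0:ℝ) T, V₁ ≤ v t) ∨ (∀ t ∈ Icc (0:ℝ) T, v t ≤ -V₁)) :
    ∀ t ∈ Icc (0:ℝ) T,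
      Real.exp (-(2 * t / V₁) * (U + Pb)) ≤
        (v t) ^ 2 * Real.exp (∫ s in (0:ℝ)..t, v s) / (v 0) ^ 2 ∧
      (v t) ^ 2 * Real.exp (∫ s in (0:ℝ)..t, v s) / (v 0) ^ 2 ≤
        Real.exp ((2 * t / V₁) * (U + Pb)) := by
  have habs := le_abs_of_forall_le_or_forall_le_neg hsign
  have hne : ∀ t ∈ Icc (0:ℝ) T, v t ≠ 0 := fun t ht =>
    abs_pos.mp (hV₁.trans_le (habs t ht))
  have hlogDeriv : ∀ t ∈ Icc (0:ℝ) T,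
      |2 * (f t - (1 / 2) * v t ^ 2 - g t) / v t + v t| ≤ 2 * (U + Pb) / V₁ := by
    intro t ht
    have hfg : |2 * (f t - g t)| ≤ 2 * (U + Pb) := by
      rw [abs_mul, abs_two]
      linarith [abs_sub (f t) (g t), hf_bdd t ht, hg_bdd t ht]
    calc |2 * (f t - (1 / 2) * v t ^ 2 - g t) / v t + v t| = |2 * (f t - g t)| / |v t| := by
          rw [← abs_div]; congr 1; field_simp [hne t ht]; ring
      _ ≤ 2 * (U + Pb) / V₁ :=
          div_le_div₀ ((abs_nonneg _).trans hfg) hfg hV₁ (habs t ht)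
  intro t ht
  have h := sq_mul_exp_integral_div_sq_mem_Icc hv hne hlogDeriv t ht
  rw [sub_zero, show 2 * (U + Pb) / V₁ * t = 2 * t / V₁ * (U + Pb) by ring] at h
  rwa [neg_mul]

/-- Abstract form of the estimate on `v² M_t'`: if
`v' = f − v²/2 − g` with `|f| ≤ U`, `|g| ≤ Pb`, and `v` stays in `[V₁,∞)` or in
`(−∞,−V₁]` on `[0,T]`, then with `M(t) = exp(∫₀ᵗ v)` one has
`e^{−(2t/V₁)(U+Pb)} ≤ v(t)² M(t)/v(0)² ≤ e^{(2t/V₁)(U+Pb)}`. -/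
theorem derivative_flow_product_estimate
    (T V₁ U Pb : ℝ) (hT : 0 < T) (hV₁ : 0 < V₁) (hU : 0 ≤ U) (hPb : 0 ≤ Pb)
    (v f g : ℝ → ℝ)
    (hf_cont : ContinuousOn f (Icc 0 T)) (hg_cont : ContinuousOn g (Icc 0 T))
    (hf_bdd : ∀ t ∈ Icc (0:ℝ) T, |f t| ≤ U)
    (hg_bdd : ∀ t ∈ Icc (0:ℝ) T, |g t| ≤ Pb)
    (hv : ∀ t ∈ Icc (0:ℝ) T, HasDerivAt v (f t - (1 / 2) * (v t) ^ 2 - g t) t)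
    (hsign : (∀ t ∈ Icc (0:ℝ) T, V₁ ≤ v t) ∨ (∀ t ∈ Icc (0:ℝ) T, v t ≤ -V₁)) :
    ∀ t ∈ Icc (0:ℝ) T,
      Real.exp (-(2 * t / V₁) * (U + Pb)) ≤
        (v t) ^ 2 * Real.exp (∫ s in (0:ℝ)..t, v s) / (v 0) ^ 2 ∧
      (v t) ^ 2 * Real.exp (∫ s in (0:ℝ)..t, v s) / (v 0) ^ 2 ≤
        Real.exp ((2 * t / V₁) * (U + Pb)) :=
  derivative_flow_product_estimate_general T V₁ U Pb hV₁ v f g hf_bdd hg_bdd hv hsign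
end

section
/- Let f : [0,∞) → (−∞,0] be continuous, nonincreasing, with f(0) = 0, and let g : [0,∞) → ℝ be bounded and satisfy g(t₂) − g(t₁) ≥ f(t₂ − t₁) for all 0 ≤ t₁ < t₂. Then the limit lim_{t→0⁺} g(t) exists. If, in addition, f is Lipschitz continuous, then g has locally bounded variation on [0,∞). -/
/-!
Since `f` is nonincreasing, the hypothesis gives `g s ≤ g t - f t` for `0 < s < t`. Letting
`s → 0⁺` bounds `limsup g` by `g t - f t`, and letting `t → 0⁺` (where `f t → 0`) bounds it by
`liminf g`, so the limit exists. If `f` is `K`-Lipschitz then `f t ≥ -K t`, so `t ↦ g t + K t`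
is monotone and `g` is a monotone function minus a linear one.
-/

open Filter Set Topology

section Variation

variable {α E : Type*} [LinearOrder α] [SeminormedAddCommGroup E]

theorem eVariationOn_add_le (f g : α → E) (s : Set α) :
    eVariationOn (f + g) s ≤ eVariationOn f s + eVariationOn g s := by
  refine iSup_le fun ⟨n, u, hu, us⟩ => ?_
  calc ∑ i ∈ Finset.range n, edist ((f + g) (u (i + 1))) ((f + g) (u i))
      ≤ ∑ i ∈ Finset.range n,
          (edist (f (u (i + 1))) (f (u i)) + edist (g (u (i + 1))) (g (u i))) :=
        Finset.sum_le_sum fun i _ => edist_add_add_le _ _ _ _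
    _ ≤ eVariationOn f s + eVariationOn g s := by
        rw [Finset.sum_add_distrib]
        exact add_le_add (eVariationOn.sum_le hu us) (eVariationOn.sum_le hu us)

theorem LocallyBoundedVariationOn.add {f g : α → E} {s : Set α}
    (hf : LocallyBoundedVariationOn f s) (hg : LocallyBoundedVariationOn g s) :
    LocallyBoundedVariationOn (f + g) s := fun a b ha hb =>
  ne_top_of_le_ne_top (ENNReal.add_ne_top.2 ⟨hf a b ha hb, hg a b ha hb⟩)
    (eVariationOn_add_le f g _)

end Variation

theorem locallyBoundedVariationOn_of_le_add_mul_sub {g : ℝ → ℝ} {s : Set ℝ} (K : ℝ)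
    (hg : ∀ x ∈ s, ∀ y ∈ s, x < y → g x ≤ g y + K * (y - x)) :
    LocallyBoundedVariationOn g s := by
  have hmono : MonotoneOn (fun t => g t + K * t) s :=
    monotoneOn_iff_forall_lt.2 fun x hx y hy hxy => by linarith [hg x hx y hy hxy]
  have hsplit : g = (fun t => g t + K * t) + fun t => (-K) • t := by
    funext t
    simp only [Pi.add_apply, smul_eq_mul]
    ring
  rw [hsplit]
  exact hmono.locallyBoundedVariationOn.add
    ((lipschitzWith_smul (-K)).locallyBoundedVariationOn s)

theorem exists_tendsto_nhdsGT_of_le_add {α : Type*} [LinearOrder α] [TopologicalSpace α]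
    [OrderTopology α] [DenselyOrdered α] [NoMaxOrder α] {g e : α → ℝ} {a : α}
    (hg : IsBoundedUnder (· ≤ ·) (𝓝[>] a) fun t => |g t|) (he : Tendsto e (𝓝[>] a) (𝓝 0))
    (hle : ∀ s t, a < s → s < t → g s ≤ g t + e t) :
    ∃ l, Tendsto g (𝓝[>] a) (𝓝 l) := by
  obtain ⟨hg_above, hg_below⟩ := isBoundedUnder_le_abs.1 hg
  set L := limsup g (𝓝[>] a)
  have hL : ∀ t, a < t → L ≤ g t + e t := fun t ht =>
    limsup_le_of_le hg_below.isCoboundedUnder_le <| by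
      filter_upwards [Ioo_mem_nhdsGT ht] with s hs using hle s t hs.1 hs.2
  have hL_le : L ≤ liminf g (𝓝[>] a) := by
    have hlim : Tendsto (fun t => L - e t) (𝓝[>] a) (𝓝 L) := by
      simpa using tendsto_const_nhds.sub he
    calc L = liminf (fun t => L - e t) (𝓝[>] a) := hlim.liminf_eq.symm
      _ ≤ liminf g (𝓝[>] a) := by
        refine liminf_le_liminf ?_ hlim.isBoundedUnder_ge hg_above.isCoboundedUnder_ge
        filter_upwards [self_mem_nhdsWithin] with t ht
        linarith [hL t ht]
  exact ⟨L, tendsto_of_liminf_eq_limsup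
    (le_antisymm (liminf_le_limsup hg_above hg_below) hL_le) rfl hg_above hg_below⟩

theorem oneSided_lower_bound_gives_limit_and_BV_general
    (f g : ℝ → ℝ)
    (hf_cont : ContinuousOn f (Ici 0))
    (hf_anti : AntitoneOn f (Ici 0))
    (hf0 : f 0 = 0)
    (hg_bdd : ∃ M : ℝ, ∀ t : ℝ, 0 ≤ t → |g t| ≤ M)
    (hineq : ∀ t₁ t₂ : ℝ, 0 ≤ t₁ → t₁ < t₂ → g t₂ - g t₁ ≥ f (t₂ - t₁)) :
    (∃ l : ℝ, Tendsto g (nhdsWithin 0 (Ioi 0)) (nhds l)) ∧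
    (∀ K : NNReal, LipschitzOnWith K f (Ici 0) →
      ∀ b : ℝ, 0 < b → BoundedVariationOn g (Icc 0 b)) := by
  refine ⟨?_, fun K hK b hb => ?_⟩
  · obtain ⟨M, hM⟩ := hg_bdd
    have hg : IsBoundedUnder (· ≤ ·) (𝓝[>] 0) fun t => |g t| :=
      isBoundedUnder_of_eventually_le <| by
        filter_upwards [self_mem_nhdsWithin] with t ht using hM t (le_of_lt ht)
    have hf_lim : Tendsto (fun t => -f t) (𝓝[>] 0) (𝓝 0) := by
      simpa [hf0] using ((hf_cont 0 self_mem_Ici).tendsto.mono_left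
        (nhdsWithin_mono _ Ioi_subset_Ici_self)).neg
    refine exists_tendsto_nhdsGT_of_le_add hg hf_lim fun s t hs hst => ?_
    have hft : f t ≤ f (t - s) :=
      hf_anti (sub_nonneg.2 hst.le) (hs.trans hst).le (sub_le_self t hs.le)
    linarith [hineq s t hs.le hst]
  · have hf_ge : ∀ x, 0 ≤ x → -(K * x) ≤ f x := fun x hx => by
      have := hK.dist_le_mul x hx 0 self_mem_Ici
      rw [hf0, Real.dist_eq, Real.dist_eq, sub_zero, sub_zero, abs_of_nonneg hx] at this
      linarith [neg_abs_le (f x)]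
    have hBV : LocallyBoundedVariationOn g (Ici 0) :=
      locallyBoundedVariationOn_of_le_add_mul_sub K fun x hx y _ hxy => by
        linarith [hineq x y hx hxy, hf_ge (y - x) (sub_nonneg.2 hxy.le)]
    simpa only [inter_eq_right.2 Icc_subset_Ici_self] using hBV 0 b self_mem_Ici hb.le

/-- Let `f : [0,∞) → (−∞,0]` be continuous, nonincreasing, with
`f(0) = 0`, and let `g : [0,∞) → ℝ` be bounded with `g(t₂) − g(t₁) ≥ f(t₂ − t₁)` for
`0 ≤ t₁ < t₂`. Then `lim_{t→0⁺} g(t)` exists; if moreover `f` is Lipschitz, then `g` has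
locally bounded variation on `[0,∞)`. -/
theorem oneSided_lower_bound_gives_limit_and_BV
    (f g : ℝ → ℝ)
    (hf_cont : ContinuousOn f (Ici 0))
    (hf_anti : AntitoneOn f (Ici 0))
    (hf_nonpos : ∀ t : ℝ, 0 ≤ t → f t ≤ 0)
    (hf0 : f 0 = 0)
    (hg_bdd : ∃ M : ℝ, ∀ t : ℝ, 0 ≤ t → |g t| ≤ M)
    (hineq : ∀ t₁ t₂ : ℝ, 0 ≤ t₁ → t₁ < t₂ → g t₂ - g t₁ ≥ f (t₂ - t₁)) :
    (∃ l : ℝ, Tendsto g (nhdsWithin 0 (Ioi 0)) (nhds l)) ∧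
    (∀ K : NNReal, LipschitzOnWith K f (Ici 0) →
      ∀ b : ℝ, 0 < b → BoundedVariationOn g (Icc 0 b)) :=
  oneSided_lower_bound_gives_limit_and_BV_general f g hf_cont hf_anti hf0 hg_bdd hineq
end

section
/- Let T > 0, 0 ≤ σ ≤ τ < T, and 0 < c ≤ C < ∞. Let S ⊆ ℝ be a measurable set, ε₀ > 0, and let M : [0,τ] × ℝ → ℝ, (t,ζ) ↦ M_t(ζ), be jointly measurable with M_t : ℝ → ℝ nondecreasing for each t, such that for every ζ ∈ S, every ε ∈ (0,ε₀), and every t ∈ [0,τ]: M_t is differentiable at ζ with M_t'(ζ) ≥ c, and c·ε ≤ M_t(ζ+ε) − M_t(ζ) ≤ C·ε. Let f : [0,T] × ℝ → ℝ be measurable with sup_{t∈[0,T]} ∫_ℝ |f(t,y)| dy < ∞. Then lim_{ε→0⁺} ∫_S ∫_σ^τ ( 1/(M_t(ζ+ε) − M_t(ζ)) ) ∫₀^{M_t(ζ+ε) − M_t(ζ)} | f(t, M_t(ζ) + y) − f(t, M_t(ζ)) | dy dt dζ = 0. In particular, there exists a sequence ε_k → 0⁺ such that for almost every ζ ∈ S,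 lim_{k→∞} ∫_σ^τ ( 1/(M_t(ζ+ε_k) − M_t(ζ)) ) ∫₀^{M_t(ζ+ε_k) − M_t(ζ)} | f(t, M_t(ζ) + y) − f(t, M_t(ζ)) | dy dt = 0. -/
/-!
Bound the average over `[M_t ζ, M_t ζ + Δ]`, `cε ≤ Δ ≤ Cε`, by `(cε)⁻¹` times the integral over
`[M_t ζ, M_t ζ + Cε]`. After integrating in `ζ ∈ S` and exchanging the order of integration,
the change of variables `x = M_t ζ`, whose Jacobian is at least `c`, bounds the `ζ`-integral by
`c⁻¹` times the `L¹` distance between `f(t, · + y)` and `f(t, ·)`. This tends to `0` with `y` by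
continuity of translations in `L¹`, uniformly enough in `t` for dominated convergence, so the
whole bound is `C / c²` times a mean over `y ∈ (0, Cε]` of something tending to `0`. A sequence
`ε_k` with summable bounds then gives almost everywhere convergence.
-/

open MeasureTheory Filter Set Topology
open scoped ENNReal

theorem ofReal_integral_le_lintegral_ofReal {α : Type*} [MeasurableSpace α] {μ : Measure α}
    (f : α → ℝ) : ENNReal.ofReal (∫ x, f x ∂μ) ≤ ∫⁻ x, ENNReal.ofReal (f x) ∂μ := by
  by_cases hf : Integrable f μ
  · rw [integral_eq_lintegral_pos_part_sub_lintegral_neg_part hf]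
    exact (ENNReal.ofReal_le_ofReal (sub_le_self _ ENNReal.toReal_nonneg)).trans
      ENNReal.ofReal_toReal_le
  · simp [integral_undef hf]

theorem one_div_mul_intervalIntegral_abs_nonneg (g : ℝ → ℝ) (a : ℝ) :
    0 ≤ 1 / a * ∫ y in 0..a, |g y| := by
  rcases le_total 0 a with ha | ha
  · exact mul_nonneg (by positivity) (intervalIntegral.integral_nonneg ha fun _ _ => abs_nonneg _)
  · rw [intervalIntegral.integral_symm]
    exact mul_nonneg_of_nonpos_of_nonpos (one_div_nonpos.2 ha)
      (neg_nonpos.2 (intervalIntegral.integral_nonneg ha fun _ _ => abs_nonneg _))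

theorem ofReal_one_div_mul_intervalIntegral_abs_le (g : ℝ → ℝ) {m a b : ℝ} (hm : 0 < m)
    (hma : m ≤ a) (hab : a ≤ b) :
    ENNReal.ofReal (1 / a * ∫ y in 0..a, |g y|) ≤
      ENNReal.ofReal m⁻¹ * ∫⁻ y in Ioc 0 b, ‖g y‖ₑ := by
  have ha : 0 < a := hm.trans_le hma
  rw [ENNReal.ofReal_mul (by positivity), intervalIntegral.integral_of_le ha.le, one_div]
  refine mul_le_mul' (ENNReal.ofReal_le_ofReal (inv_anti₀ hm hma)) ?_
  calc ENNReal.ofReal (∫ y in Ioc 0 a, |g y|) ≤ ∫⁻ y in Ioc 0 a, ‖g y‖ₑ := by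
        simpa only [Real.enorm_eq_ofReal_abs] using ofReal_integral_le_lintegral_ofReal _
    _ ≤ ∫⁻ y in Ioc 0 b, ‖g y‖ₑ := lintegral_mono_set (Ioc_subset_Ioc_right hab)

theorem setLIntegral_comp_le_inv_mul_lintegral {s : Set ℝ} (hs : MeasurableSet s)
    {f f' : ℝ → ℝ} (hf' : ∀ x ∈ s, HasDerivWithinAt f (f' x) s x) (hf : InjOn f s) {c : ℝ}
    (hc : 0 < c) (hcf' : ∀ x ∈ s, c ≤ |f' x|) (g : ℝ → ℝ≥0∞) :
    ∫⁻ x in s, g (f x) ≤ (ENNReal.ofReal c)⁻¹ * ∫⁻ y, g y := by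
  refine (ENNReal.mul_le_iff_le_inv (by simpa using hc) ENNReal.ofReal_ne_top).1 ?_
  calc ENNReal.ofReal c * ∫⁻ x in s, g (f x)
      = ∫⁻ x in s, ENNReal.ofReal c * g (f x) :=
        (lintegral_const_mul' _ _ ENNReal.ofReal_ne_top).symm
    _ ≤ ∫⁻ x in s, ENNReal.ofReal |f' x| * g (f x) :=
        setLIntegral_mono' hs fun x hx => by gcongr; exact hcf' x hx
    _ = ∫⁻ y in f '' s, g y := (lintegral_image_eq_lintegral_abs_deriv_mul hs hf' hf g).symm
    _ ≤ ∫⁻ y, g y := setLIntegral_le_lintegral _ _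

theorem Monotone.injOn_of_lt_add {f : ℝ → ℝ} (hf : Monotone f) {s : Set ℝ} {ε₀ : ℝ}
    (hε₀ : 0 < ε₀) (h : ∀ x ∈ s, ∀ ε, 0 < ε → ε < ε₀ → f x < f (x + ε)) : InjOn f s := by
  have hlt : ∀ x ∈ s, ∀ x', x < x' → f x < f x' := fun x hx x' hxx' => by
    set ε := min (x' - x) (ε₀ / 2)
    have hε : ε ≤ x' - x := min_le_left _ _
    have hε' : ε ≤ ε₀ / 2 := min_le_right _ _
    exact (h x hx ε (by positivity) (by linarith)).trans_le (hf (by linarith))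
  intro x hx x' hx' hfx
  by_contra hne
  rcases lt_or_gt_of_ne hne with hxx' | hxx'
  · exact (hlt x hx x' hxx').ne hfx
  · exact (hlt x' hx' x hxx').ne hfx.symm

theorem tendsto_eLpNorm_comp_add_right_sub_self {G E : Type*} [AddGroup G] [TopologicalSpace G]
    [IsTopologicalAddGroup G] [MeasurableSpace G] [BorelSpace G] [NormedAddCommGroup E]
    {μ : Measure G} [μ.IsAddRightInvariant] [μ.InnerRegularCompactLTTop]
    [IsLocallyFiniteMeasure μ] {p : ℝ≥0∞} [Fact (1 ≤ p)] (hp : p ≠ ∞) {g : G → E}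
    (hg : MemLp g p μ) :
    Tendsto (fun y => eLpNorm (fun x => g (x + y) - g x) p μ) (𝓝 0) (𝓝 0) := by
  -- Translations form a continuous family in `C(G, G)`, so joint continuity of composition in `Lp`
  -- applies.
  let shift : C(G, C(G, G)) := ContinuousMap.curry ⟨fun q : G × G => q.2 + q.1, by fun_prop⟩
  have hshift : ∀ y, MeasurePreserving (shift y) μ μ := fun y => measurePreserving_add_right μ y
  let F : G → Lp E p μ := fun y => Lp.compMeasurePreserving (shift y) (hshift y) (hg.toLp g)
  have hF : Tendsto F (𝓝 0) (𝓝 (F 0)) :=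
    tendsto_const_nhds.compMeasurePreservingLp shift.continuous.continuousAt _ _ hp
  have hdist : ∀ y, edist (F y) (F 0) = eLpNorm (fun x => g (x + y) - g x) p μ := by
    intro y
    rw [Lp.edist_def]
    refine eLpNorm_congr_ae ?_
    filter_upwards [Lp.coeFn_compMeasurePreserving (hg.toLp g) (hshift y),
      Lp.coeFn_compMeasurePreserving (hg.toLp g) (hshift 0),
      (hshift y).quasiMeasurePreserving.ae_eq_comp hg.coeFn_toLp,
      (hshift 0).quasiMeasurePreserving.ae_eq_comp hg.coeFn_toLp] with x hy h0 hgy hg0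
    simp only [Pi.sub_apply, F]
    rw [hy, h0, hgy, hg0]
    simp [shift]
  simpa [hdist] using tendsto_iff_edist_tendsto_0.1 hF

theorem tendsto_lintegral_eLpNorm_comp_add_right_sub {α : Type*} [MeasurableSpace α]
    {ν : Measure α} [IsFiniteMeasure ν] {f : α → ℝ → ℝ}
    (hf : Measurable fun p : α × ℝ => f p.1 p.2) (hint : ∀ᵐ t ∂ν, Integrable (f t)) {B : ℝ}
    (hB : ∀ᵐ t ∂ν, ∫ x, |f t x| ≤ B) :
    Tendsto (fun y => ∫⁻ t, eLpNorm (fun x => f t (x + y) - f t x) 1 volume ∂ν) (𝓝 0) (𝓝 0) := by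
  have hmeas : ∀ y, Measurable fun t => eLpNorm (fun x => f t (x + y) - f t x) 1 volume := by
    intro y
    simp_rw [eLpNorm_one_eq_lintegral_enorm]
    exact ((hf.comp (f := fun p : α × ℝ => (p.1, p.2 + y)) (by fun_prop)).sub
      hf).enorm.lintegral_prod_right'
  have hbound : ∀ y, ∀ᵐ t ∂ν,
      eLpNorm (fun x => f t (x + y) - f t x) 1 volume ≤ 2 * ENNReal.ofReal B := by
    intro y
    filter_upwards [hint, hB] with t ht htB
    have hshift := measurePreserving_add_right (volume : Measure ℝ) y
    calc eLpNorm (fun x => f t (x + y) - f t x) 1 volume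
        ≤ eLpNorm (fun x => f t (x + y)) 1 volume + eLpNorm (f t) 1 volume :=
          eLpNorm_sub_le (ht.1.comp_measurePreserving hshift) ht.1 le_rfl
      _ = 2 * eLpNorm (f t) 1 volume := by
          rw [← Function.comp_def, eLpNorm_comp_measurePreserving ht.1 hshift, two_mul]
      _ ≤ 2 * ENNReal.ofReal B := by
          rw [eLpNorm_one_eq_lintegral_enorm, ← ofReal_integral_norm_eq_lintegral_enorm ht]
          gcongr
          simpa only [Real.norm_eq_abs] using htB
  have hfin : ∫⁻ _, 2 * ENNReal.ofReal B ∂ν ≠ ∞ := by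
    simp [lintegral_const, ENNReal.mul_eq_top, measure_ne_top]
  have hlim : ∀ᵐ t ∂ν,
      Tendsto (fun y => eLpNorm (fun x => f t (x + y) - f t x) 1 volume) (𝓝 0) (𝓝 0) := by
    filter_upwards [hint] with t ht
    exact tendsto_eLpNorm_comp_add_right_sub_self ENNReal.one_ne_top
      (memLp_one_iff_integrable.2 ht)
  simpa using tendsto_lintegral_filter_of_dominated_convergence _ (.of_forall hmeas)
    (.of_forall hbound) hfin hlim

theorem tendsto_setLAverage_Ioc_zero {Ψ : ℝ → ℝ≥0∞} (hΨ : Tendsto Ψ (𝓝[>] 0) (𝓝 0)) :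
    Tendsto (fun r => ⨍⁻ y in Ioc 0 r, Ψ y ∂volume) (𝓝[>] 0) (𝓝 0) := by
  refine ENNReal.tendsto_nhds_zero.2 fun δ hδ => ?_
  obtain ⟨u, hu, hΨu⟩ :=
    mem_nhdsGT_iff_exists_Ioo_subset.1 (ENNReal.tendsto_nhds_zero.1 hΨ δ hδ)
  filter_upwards [Ioo_mem_nhdsGT hu] with r hr
  refine (laverage_le_essSup _).trans (essSup_le_of_ae_le _ ?_)
  filter_upwards [ae_restrict_mem measurableSet_Ioc] with y hy
  exact hΨu ⟨hy.1, hy.2.trans_lt hr.2⟩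

theorem tendsto_ofReal_inv_mul_setLIntegral_Ioc {Ψ : ℝ → ℝ≥0∞}
    (hΨ : Tendsto Ψ (𝓝[>] 0) (𝓝 0)) {K : ℝ} (hK : 0 < K) (c : ℝ) :
    Tendsto (fun ε => ENNReal.ofReal (c * ε)⁻¹ * ∫⁻ y in Ioc 0 (K * ε), Ψ y) (𝓝[>] 0) (𝓝 0) := by
  have hKε : Tendsto (fun ε => K * ε) (𝓝[>] 0) (𝓝[>] 0) :=
    tendsto_iff_comap.2 (comap_mulLeft_nhdsGT_zero hK).ge
  have h := ENNReal.Tendsto.const_mul ((tendsto_setLAverage_Ioc_zero hΨ).comp hKε)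
    (a := ENNReal.ofReal (K / c)) (Or.inr ENNReal.ofReal_ne_top)
  rw [mul_zero] at h
  refine h.congr' ?_
  filter_upwards [self_mem_nhdsWithin] with ε (hε : 0 < ε)
  simp only [Function.comp_apply, setLAverage_eq, Real.volume_Ioc, sub_zero]
  rw [ENNReal.div_eq_inv_mul, ← mul_assoc, ← ENNReal.ofReal_inv_of_pos (by positivity),
    ← ENNReal.ofReal_mul' (by positivity)]
  congr 2
  rw [div_eq_mul_inv, mul_inv, mul_inv]
  field_simp

theorem lintegral_lintegral_lintegral_swap {α β γ : Type*} [MeasurableSpace α]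
    [MeasurableSpace β] [MeasurableSpace γ] {μ : Measure α} {ν : Measure β} {ρ : Measure γ}
    [SFinite μ] [SFinite ν] [SFinite ρ] {H : α → β → γ → ℝ≥0∞}
    (hH : Measurable fun p : α × β × γ => H p.1 p.2.1 p.2.2) :
    ∫⁻ a, ∫⁻ b, ∫⁻ c, H a b c ∂ρ ∂ν ∂μ = ∫⁻ c, ∫⁻ b, ∫⁻ a, H a b c ∂μ ∂ν ∂ρ := by
  have h₁ : Measurable fun q : (α × β) × γ => H q.1.1 q.1.2 q.2 :=
    hH.comp (f := fun q : (α × β) × γ => (q.1.1, q.1.2, q.2)) (by fun_prop)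
  have h₂ : Measurable fun q : (β × γ) × α => H q.2 q.1.1 q.1.2 :=
    hH.comp (f := fun q : (β × γ) × α => (q.2, q.1.1, q.1.2)) (by fun_prop)
  calc ∫⁻ a, ∫⁻ b, ∫⁻ c, H a b c ∂ρ ∂ν ∂μ = ∫⁻ b, ∫⁻ a, ∫⁻ c, H a b c ∂ρ ∂μ ∂ν :=
        lintegral_lintegral_swap h₁.lintegral_prod_right'.aemeasurable
    _ = ∫⁻ b, ∫⁻ c, ∫⁻ a, H a b c ∂μ ∂ρ ∂ν := lintegral_congr fun b =>
        lintegral_lintegral_swap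
          (hH.comp (f := fun q : α × γ => (q.1, b, q.2)) (by fun_prop)).aemeasurable
    _ = ∫⁻ c, ∫⁻ b, ∫⁻ a, H a b c ∂μ ∂ν ∂ρ :=
        lintegral_lintegral_swap h₂.lintegral_prod_right'.aemeasurable

theorem tendsto_zero_of_ofReal_le {ι : Type*} {l : Filter ι} {u : ι → ℝ} {v : ι → ℝ≥0∞}
    (hu : ∀ᶠ i in l, 0 ≤ u i) (huv : ∀ᶠ i in l, ENNReal.ofReal (u i) ≤ v i)
    (hv : Tendsto v l (𝓝 0)) : Tendsto u l (𝓝 0) := by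
  have h : Tendsto (fun i => ENNReal.ofReal (u i)) l (𝓝 0) :=
    tendsto_of_tendsto_of_tendsto_of_le_of_le' tendsto_const_nhds hv
      (.of_forall fun _ => zero_le) huv
  refine ((ENNReal.tendsto_toReal ENNReal.zero_ne_top).comp h).congr' ?_
  filter_upwards [hu] with i hi
  exact ENNReal.toReal_ofReal hi

theorem exists_seq_tendsto_ae_of_tendsto_lintegral {α : Type*} [MeasurableSpace α]
    {μ : Measure α} {F : ℝ → α → ℝ≥0∞} (hF : ∀ ε, AEMeasurable (F ε) μ)
    (h : Tendsto (fun ε => ∫⁻ x, F ε x ∂μ) (𝓝[>] 0) (𝓝 0)) :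
    ∃ εs : ℕ → ℝ, (∀ k, 0 < εs k) ∧ Tendsto εs atTop (𝓝 0) ∧
      ∀ᵐ x ∂μ, Tendsto (fun k => F (εs k) x) atTop (𝓝 0) := by
  have hchoice : ∀ k : ℕ, ∃ ε ∈ Ioo (0 : ℝ) (1 / (k + 1)), ∫⁻ x, F ε x ∂μ ≤ 2⁻¹ ^ k := fun k =>
    (Filter.Eventually.and (Ioo_mem_nhdsGT (by positivity))
      (ENNReal.tendsto_nhds_zero.1 h _ (ENNReal.pow_pos (by norm_num) k))).exists
  choose εs hεs hsmall using hchoice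
  refine ⟨εs, fun k => (hεs k).1, ?_, ?_⟩
  · exact squeeze_zero (fun k => (hεs k).1.le) (fun k => (hεs k).2.le)
      tendsto_one_div_add_atTop_nhds_zero_nat
  · have hsum : ∫⁻ x, ∑' k, F (εs k) x ∂μ ≠ ∞ := by
      rw [lintegral_tsum fun k => hF (εs k)]
      refine ne_top_of_le_ne_top ?_ (ENNReal.tsum_le_tsum hsmall)
      simp [ENNReal.tsum_geometric, ENNReal.one_sub_inv_two]
    filter_upwards [ae_lt_top' (AEMeasurable.tsum fun k => hF (εs k)) hsum] with x hx
    exact ENNReal.tendsto_atTop_zero_of_tsum_ne_top hx.ne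

section Oscillation

variable {σ τ c C : ℝ} {S : Set ℝ} {M f : ℝ → ℝ → ℝ}

noncomputable def averagedOscillation (σ τ : ℝ) (M f : ℝ → ℝ → ℝ) (ε ζ : ℝ) : ℝ :=
  ∫ t in σ..τ, (1 / (M t (ζ + ε) - M t ζ)) *
    ∫ y in (0:ℝ)..(M t (ζ + ε) - M t ζ), |f t (M t ζ + y) - f t (M t ζ)|

noncomputable def oscillationIntegral (σ τ h : ℝ) (M f : ℝ → ℝ → ℝ) (ζ : ℝ) : ℝ≥0∞ :=
  ∫⁻ t in Ioc σ τ, ∫⁻ y in Ioc 0 h, ‖f t (M t ζ + y) - f t (M t ζ)‖ₑ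

theorem averagedOscillation_nonneg (hστ : σ ≤ τ) (M f : ℝ → ℝ → ℝ) (ε ζ : ℝ) :
    0 ≤ averagedOscillation σ τ M f ε ζ :=
  intervalIntegral.integral_nonneg hστ fun _ _ => one_div_mul_intervalIntegral_abs_nonneg _ _

theorem ofReal_averagedOscillation_le (hστ : σ ≤ τ) (hc : 0 < c) {ε ζ : ℝ} (hε : 0 < ε)
    (hΔ : ∀ t ∈ Ioc σ τ, c * ε ≤ M t (ζ + ε) - M t ζ ∧ M t (ζ + ε) - M t ζ ≤ C * ε) :
    ENNReal.ofReal (averagedOscillation σ τ M f ε ζ) ≤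
      ENNReal.ofReal (c * ε)⁻¹ * oscillationIntegral σ τ (C * ε) M f ζ := by
  rw [averagedOscillation, intervalIntegral.integral_of_le hστ, oscillationIntegral,
    ← lintegral_const_mul' _ _ ENNReal.ofReal_ne_top]
  refine (ofReal_integral_le_lintegral_ofReal _).trans
    (setLIntegral_mono' measurableSet_Ioc fun t ht => ?_)
  exact ofReal_one_div_mul_intervalIntegral_abs_le _ (by positivity) (hΔ t ht).1 (hΔ t ht).2

theorem measurable_oscillation (hM : Measurable fun p : ℝ × ℝ => M p.1 p.2)
    (hf : Measurable fun p : ℝ × ℝ => f p.1 p.2) :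
    Measurable fun p : ℝ × ℝ × ℝ => ‖f p.2.1 (M p.2.1 p.1 + p.2.2) - f p.2.1 (M p.2.1 p.1)‖ₑ := by
  have hMp : Measurable fun p : ℝ × ℝ × ℝ => M p.2.1 p.1 :=
    hM.comp (f := fun p : ℝ × ℝ × ℝ => (p.2.1, p.1)) (by fun_prop)
  exact ((hf.comp (f := fun p : ℝ × ℝ × ℝ => (p.2.1, M p.2.1 p.1 + p.2.2)) (by fun_prop)).sub
    (hf.comp (f := fun p : ℝ × ℝ × ℝ => (p.2.1, M p.2.1 p.1)) (by fun_prop))).enorm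

theorem measurable_oscillationIntegral (hM : Measurable fun p : ℝ × ℝ => M p.1 p.2)
    (hf : Measurable fun p : ℝ × ℝ => f p.1 p.2) (σ τ h : ℝ) :
    Measurable (oscillationIntegral σ τ h M f) := by
  have hH := (measurable_oscillation hM hf).comp
    (f := fun q : (ℝ × ℝ) × ℝ => (q.1.1, q.1.2, q.2)) (by fun_prop)
  exact hH.lintegral_prod_right'.lintegral_prod_right'

theorem setLIntegral_oscillationIntegral_le (hM : Measurable fun p : ℝ × ℝ => M p.1 p.2)
    (hf : Measurable fun p : ℝ × ℝ => f p.1 p.2) (hS : MeasurableSet S) (hc : 0 < c)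
    (hinj : ∀ t ∈ Ioc σ τ, InjOn (M t) S)
    (hderiv : ∀ t ∈ Ioc σ τ, ∀ ζ ∈ S, ∃ d, HasDerivAt (M t) d ζ ∧ c ≤ d) (h : ℝ) :
    ∫⁻ ζ in S, oscillationIntegral σ τ h M f ζ ≤ (ENNReal.ofReal c)⁻¹ *
      ∫⁻ y in Ioc 0 h, ∫⁻ t in Ioc σ τ, eLpNorm (fun x => f t (x + y) - f t x) 1 volume := by
  have hc' : (ENNReal.ofReal c)⁻¹ ≠ ∞ := by simpa using hc
  simp only [oscillationIntegral]
  rw [lintegral_lintegral_lintegral_swap (measurable_oscillation hM hf),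
    ← lintegral_const_mul' _ _ hc']
  refine lintegral_mono fun y => ?_
  rw [← lintegral_const_mul' _ _ hc']
  refine setLIntegral_mono' measurableSet_Ioc fun t ht => ?_
  choose! d hd hcd using hderiv t ht
  rw [eLpNorm_one_eq_lintegral_enorm]
  exact setLIntegral_comp_le_inv_mul_lintegral hS (fun ζ hζ => (hd ζ hζ).hasDerivWithinAt)
    (hinj t ht) hc (fun ζ hζ => (hcd ζ hζ).trans (le_abs_self _)) fun x => ‖f t (x + y) - f t x‖ₑ

theorem tendsto_setLIntegral_oscillationIntegral (hM : Measurable fun p : ℝ × ℝ => M p.1 p.2)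
    (hf : Measurable fun p : ℝ × ℝ => f p.1 p.2) (hS : MeasurableSet S) (hc : 0 < c)
    (hC : 0 < C) (hinj : ∀ t ∈ Ioc σ τ, InjOn (M t) S)
    (hderiv : ∀ t ∈ Ioc σ τ, ∀ ζ ∈ S, ∃ d, HasDerivAt (M t) d ζ ∧ c ≤ d)
    (hint : ∀ t ∈ Ioc σ τ, Integrable (f t)) {B : ℝ} (hB : ∀ t ∈ Ioc σ τ, ∫ x, |f t x| ≤ B) :
    Tendsto (fun ε => ∫⁻ ζ in S, ENNReal.ofReal (c * ε)⁻¹ * oscillationIntegral σ τ (C * ε) M f ζ)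
      (𝓝[>] 0) (𝓝 0) := by
  have hΨ := tendsto_lintegral_eLpNorm_comp_add_right_sub (ν := volume.restrict (Ioc σ τ)) hf
    ((ae_restrict_iff' measurableSet_Ioc).2 (.of_forall hint))
    ((ae_restrict_iff' measurableSet_Ioc).2 (.of_forall hB))
  have hbound := ENNReal.Tendsto.const_mul (a := (ENNReal.ofReal c)⁻¹)
    (tendsto_ofReal_inv_mul_setLIntegral_Ioc (hΨ.mono_left nhdsWithin_le_nhds) hC c)
    (Or.inr (by simpa using hc))
  rw [mul_zero] at hbound
  refine tendsto_of_tendsto_of_tendsto_of_le_of_le tendsto_const_nhds hbound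
    (fun _ => zero_le) fun ε => ?_
  rw [lintegral_const_mul _ (measurable_oscillationIntegral hM hf _ _ _), mul_left_comm]
  gcongr
  exact setLIntegral_oscillationIntegral_le hM hf hS hc hinj hderiv _

end Oscillation

theorem averaged_lebesgue_point_convergence_general
    (T σ τ c C : ℝ) (hσ : 0 ≤ σ) (hστ : σ ≤ τ) (hτT : τ < T)
    (hc : 0 < c) (hcC : c ≤ C)
    (S : Set ℝ) (hS : MeasurableSet S)
    (ε₀ : ℝ) (hε₀ : 0 < ε₀)
    (M : ℝ → ℝ → ℝ)
    (hM_meas : Measurable (fun p : ℝ × ℝ => M p.1 p.2))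
    (hM_mono : ∀ t ∈ Icc (0:ℝ) τ, Monotone (M t))
    (hM_deriv : ∀ ζ ∈ S, ∀ t ∈ Icc (0:ℝ) τ, ∃ d : ℝ, HasDerivAt (M t) d ζ ∧ c ≤ d)
    (hM_quot : ∀ ζ ∈ S, ∀ ε : ℝ, 0 < ε → ε < ε₀ → ∀ t ∈ Icc (0:ℝ) τ,
      c * ε ≤ M t (ζ + ε) - M t ζ ∧ M t (ζ + ε) - M t ζ ≤ C * ε)
    (f : ℝ → ℝ → ℝ)
    (hf_meas : Measurable (fun p : ℝ × ℝ => f p.1 p.2))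
    (hf_int : ∀ t ∈ Icc (0:ℝ) T, Integrable (f t))
    (hf_bdd : ∃ B : ℝ, ∀ t ∈ Icc (0:ℝ) T, (∫ y : ℝ, |f t y|) ≤ B) :
    Tendsto (fun ε : ℝ => ∫ ζ in S, ∫ t in σ..τ,
        (1 / (M t (ζ + ε) - M t ζ)) *
          ∫ y in (0:ℝ)..(M t (ζ + ε) - M t ζ), |f t (M t ζ + y) - f t (M t ζ)|)
      (nhdsWithin 0 (Ioi 0)) (nhds 0) ∧
    ∃ εseq : ℕ → ℝ, (∀ k, 0 < εseq k) ∧ Tendsto εseq atTop (nhds 0) ∧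
      ∀ᵐ ζ ∂(volume.restrict S),
        Tendsto (fun k : ℕ => ∫ t in σ..τ,
            (1 / (M t (ζ + εseq k) - M t ζ)) *
              ∫ y in (0:ℝ)..(M t (ζ + εseq k) - M t ζ),
                |f t (M t ζ + y) - f t (M t ζ)|)
          atTop (nhds 0) := by
  obtain ⟨B, hB⟩ := hf_bdd
  have hIcc : ∀ t ∈ Ioc σ τ, t ∈ Icc 0 τ := fun t ht => ⟨hσ.trans ht.1.le, ht.2⟩
  have hIccT : ∀ t ∈ Ioc σ τ, t ∈ Icc 0 T := fun t ht => ⟨(hIcc t ht).1, ht.2.trans hτT.le⟩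
  have hinj : ∀ t ∈ Ioc σ τ, InjOn (M t) S := fun t ht =>
    (hM_mono t (hIcc t ht)).injOn_of_lt_add hε₀ fun ζ hζ ε hε hε' =>
      sub_pos.1 ((mul_pos hc hε).trans_le (hM_quot ζ hζ ε hε hε' t (hIcc t ht)).1)
  have hlim := tendsto_setLIntegral_oscillationIntegral hM_meas hf_meas hS hc (hc.trans_le hcC)
    hinj (fun t ht ζ hζ => hM_deriv ζ hζ t (hIcc t ht)) (fun t ht => hf_int t (hIccT t ht))
    (fun t ht => hB t (hIccT t ht))
  have hF : ∀ ε ∈ Ioo 0 ε₀, ∀ ζ ∈ S, ENNReal.ofReal (averagedOscillation σ τ M f ε ζ) ≤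
      ENNReal.ofReal (c * ε)⁻¹ * oscillationIntegral σ τ (C * ε) M f ζ :=
    fun ε hε ζ hζ => ofReal_averagedOscillation_le hστ hc hε.1
      fun t ht => hM_quot ζ hζ ε hε.1 hε.2 t (hIcc t ht)
  refine ⟨tendsto_zero_of_ofReal_le (.of_forall fun ε => integral_nonneg fun ζ =>
      averagedOscillation_nonneg hστ M f ε ζ) ?_ hlim, ?_⟩
  · filter_upwards [Ioo_mem_nhdsGT hε₀] with ε hε
    exact (ofReal_integral_le_lintegral_ofReal _).trans (setLIntegral_mono' hS (hF ε hε))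
  obtain ⟨εs, hεs_pos, hεs, hae⟩ := exists_seq_tendsto_ae_of_tendsto_lintegral
    (fun _ => ((measurable_oscillationIntegral hM_meas hf_meas _ _ _).const_mul _).aemeasurable)
    hlim
  refine ⟨εs, hεs_pos, hεs, ?_⟩
  filter_upwards [hae, ae_restrict_mem hS] with ζ hζ hζS
  refine tendsto_zero_of_ofReal_le (.of_forall fun _ => averagedOscillation_nonneg hστ M f _ ζ)
    ?_ hζ
  filter_upwards [(tendsto_order.1 hεs).2 ε₀ hε₀] with k hk
  exact hF _ ⟨hεs_pos k, hk⟩ ζ hζS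

/-- Averaged Lebesgue-point convergence along a monotone family of flow
maps `M_t` with two-sided quotient bounds `c·ε ≤ M_t(ζ+ε) − M_t(ζ) ≤ C·ε` on a set `S`:
the averaged oscillation of `f(t,·)` over the shrinking intervals
`[M_t(ζ), M_t(ζ+ε)]` tends to `0` in `L¹(S)`, and along a sequence `ε_k → 0⁺` it tends
to `0` for almost every `ζ ∈ S`. -/
theorem averaged_lebesgue_point_convergence
    (T σ τ c C : ℝ) (hT : 0 < T) (hσ : 0 ≤ σ) (hστ : σ ≤ τ) (hτT : τ < T)
    (hc : 0 < c) (hcC : c ≤ C)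
    (S : Set ℝ) (hS : MeasurableSet S)
    (ε₀ : ℝ) (hε₀ : 0 < ε₀)
    (M : ℝ → ℝ → ℝ)
    (hM_meas : Measurable (fun p : ℝ × ℝ => M p.1 p.2))
    (hM_mono : ∀ t ∈ Icc (0:ℝ) τ, Monotone (M t))
    (hM_deriv : ∀ ζ ∈ S, ∀ t ∈ Icc (0:ℝ) τ, ∃ d : ℝ, HasDerivAt (M t) d ζ ∧ c ≤ d)
    (hM_quot : ∀ ζ ∈ S, ∀ ε : ℝ, 0 < ε → ε < ε₀ → ∀ t ∈ Icc (0:ℝ) τ,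
      c * ε ≤ M t (ζ + ε) - M t ζ ∧ M t (ζ + ε) - M t ζ ≤ C * ε)
    (f : ℝ → ℝ → ℝ)
    (hf_meas : Measurable (fun p : ℝ × ℝ => f p.1 p.2))
    (hf_int : ∀ t ∈ Icc (0:ℝ) T, Integrable (f t))
    (hf_bdd : ∃ B : ℝ, ∀ t ∈ Icc (0:ℝ) T, (∫ y : ℝ, |f t y|) ≤ B) :
    Tendsto (fun ε : ℝ => ∫ ζ in S, ∫ t in σ..τ,
        (1 / (M t (ζ + ε) - M t ζ)) *
          ∫ y in (0:ℝ)..(M t (ζ + ε) - M t ζ), |f t (M t ζ + y) - f t (M t ζ)|)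
      (nhdsWithin 0 (Ioi 0)) (nhds 0) ∧
    ∃ εseq : ℕ → ℝ, (∀ k, 0 < εseq k) ∧ Tendsto εseq atTop (nhds 0) ∧
      ∀ᵐ ζ ∂(volume.restrict S),
        Tendsto (fun k : ℕ => ∫ t in σ..τ,
            (1 / (M t (ζ + εseq k) - M t ζ)) *
              ∫ y in (0:ℝ)..(M t (ζ + εseq k) - M t ζ),
                |f t (M t ζ + y) - f t (M t ζ)|)
          atTop (nhds 0) :=
  averaged_lebesgue_point_convergence_general T σ τ c C hσ hστ hτT hc hcC S hS ε₀ hε₀ M hM_meas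
    hM_mono hM_deriv hM_quot f hf_meas hf_int hf_bdd
end
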